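/- arXiv:1206.6574 — 8 statements merged into one kernel-verified Lean document; each statement's English description precedes it below -/
import Mathlib

section
/- Let J be the n×n nilpotent Jordan block over a field K of characteristic zero. Then the linear span of the set {exp(xJ) : x ∈ K} equals the K-vector space spanned by E, J, J², …, J^{n−1} (where E is the identity matrix). -/
/-- The nilpotent Jordan block of size `n`. -/
def jordanBlock (K : Type*) [Field K] (n : ℕ) : Matrix (Fin n) (Fin n) K :=
  fun i j => if (j : ℕ) = (i : ℕ) + 1 then 1 else 0

/-- The exponential `exp (x J)` of a scalar multiple of the Jordan block, as a finite sum
`∑_{k < n} x^k / k! • J^k` (the series terminates since `J^n = 0`). -/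
noncomputable def expJordan (K : Type*) [Field K] (n : ℕ) (x : K) : Matrix (Fin n) (Fin n) K :=
  ∑ k ∈ Finset.range n, (x ^ k / (Nat.factorial k : K)) • (jordanBlock K n) ^ k

/-!
`exp (x J) = ∑_{k < n} (x^k / k!) J^k`, so every `exp (x J)` lies in the span of the powers
`J^k`. Conversely, the coefficients of `exp (0 J), …, exp ((n-1) J)` in the powers form the
matrix `(i^k / k!)`, a Vandermonde matrix times an invertible diagonal one; inverting it
expresses each `J^k` as a linear combination of these exponentials.
-/

open Matrix

section SpanLinearCombination

variable {R M ι κ : Type*} [CommRing R] [AddCommGroup M] [Module R M] [Fintype ι]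

theorem Submodule.span_range_sum_smul_le (A : Matrix κ ι R) (v : ι → M) :
    Submodule.span R (Set.range fun i => ∑ j, A i j • v j) ≤ Submodule.span R (Set.range v) :=
  Submodule.span_le.mpr <| Set.range_subset_iff.mpr fun _ =>
    Submodule.sum_smul_mem _ _ fun j _ => Submodule.subset_span ⟨j, rfl⟩

theorem Submodule.span_range_sum_smul_eq [DecidableEq ι] (A : Matrix ι ι R) (hA : IsUnit A.det)
    (v : ι → M) :
    Submodule.span R (Set.range fun i => ∑ j, A i j • v j) =
      Submodule.span R (Set.range v) := by
  refine le_antisymm (Submodule.span_range_sum_smul_le A v) ?_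
  have hv : v = fun k => ∑ i, A⁻¹ k i • ∑ j, A i j • v j := by
    funext k
    simp only [Finset.smul_sum, smul_smul]
    rw [Finset.sum_comm]
    simp only [← Finset.sum_smul, ← mul_apply, nonsing_inv_mul A hA, one_apply, ite_smul,
      one_smul, zero_smul, Finset.sum_ite_eq, Finset.mem_univ, if_true]
  conv_lhs => rw [hv]
  exact Submodule.span_range_sum_smul_le A⁻¹ _

end SpanLinearCombination

noncomputable def expCoeff (K : Type*) [Field K] (n : ℕ) : Matrix K (Fin n) K :=
  of fun x k => x ^ (k : ℕ) / (Nat.factorial k : K)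

theorem expJordan_eq_sum_expCoeff (K : Type*) [Field K] (n : ℕ) (x : K) :
    expJordan K n x = ∑ k : Fin n, expCoeff K n x k • (jordanBlock K n) ^ (k : ℕ) :=
  Finset.sum_range fun k => (x ^ k / (Nat.factorial k : K)) • (jordanBlock K n) ^ k

theorem isUnit_det_expCoeff_submatrix (K : Type*) [Field K] [CharZero K] (n : ℕ)
    {f : Fin n → K} (hf : Function.Injective f) :
    IsUnit ((expCoeff K n).submatrix f id).det := by
  have hfactor : (expCoeff K n).submatrix f id =
      vandermonde f * diagonal fun k : Fin n => ((Nat.factorial k : K))⁻¹ := by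
    ext i k
    simp [expCoeff, mul_diagonal, vandermonde, div_eq_mul_inv]
  rw [hfactor, det_mul, det_diagonal, isUnit_iff_ne_zero]
  refine mul_ne_zero (det_vandermonde_ne_zero_iff.mpr hf) ?_
  exact Finset.prod_ne_zero_iff.mpr fun k _ =>
    inv_ne_zero (Nat.cast_ne_zero.mpr k.1.factorial_ne_zero)

/-- over a field of characteristic zero, the linear span of
`{exp(xJ) : x ∈ K}` equals the span of `E, J, J², …, J^{n-1}`. -/
theorem span_exp_eq_span_powers (K : Type*) [Field K] [CharZero K] (n : ℕ) :
    Submodule.span K (Set.range (expJordan K n)) =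
      Submodule.span K (Set.range fun k : Fin n => (jordanBlock K n) ^ (k : ℕ)) := by
  have hexp : expJordan K n =
      fun x => ∑ k : Fin n, expCoeff K n x k • jordanBlock K n ^ (k : ℕ) :=
    funext (expJordan_eq_sum_expCoeff K n)
  have hnat : Function.Injective fun i : Fin n => ((i : ℕ) : K) :=
    Nat.cast_injective.comp Fin.val_injective
  refine le_antisymm (hexp ▸ Submodule.span_range_sum_smul_le _ _) ?_
  rw [← Submodule.span_range_sum_smul_eq _ (isUnit_det_expCoeff_submatrix K n hnat)]
  refine Submodule.span_mono ?_
  rintro _ ⟨i, rfl⟩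
  exact ⟨(i : K), expJordan_eq_sum_expCoeff K n _⟩
end

section
/- Let J be a nilpotent endomorphism of a finite-dimensional vector space V, and let f₁ > ⋯ > f_s > 0 be the distinct Jordan block sizes of J, with multiplicities m₁, …, m_s. Define U_i = (ker J^{f_i} + im J)/(ker J^{f_i−1} + im J) and W_i = (ker J ∩ im J^{f_i−1})/(ker J ∩ im J^{f_i}). Then dim U_i = dim W_i = m_i for each i = 1, …, s. -/
open Module LinearMap

/-!
Put `d j = dim ker J^j` and `r j = dim im J^j = dim V - d j`. Restricting `J^b` to `ker J^(a+b)`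
has image `ker J^a ∩ im J^b` and kernel `ker J^b`; with the dimension formula for `ker J^k + im J`
this shows that both subquotients for `k = f i` have dimension `2 d k - d (k-1) - d (k+1)`, which
is the second difference `r (k-1) - 2 r k + r (k+1)`. In `r j = ∑ₗ mₗ (fₗ - j)` the second
difference of `j ↦ fₗ - j` at `k` is `1` if `fₗ = k` and `0` otherwise, leaving `m i`.
-/

theorem Submodule.finrank_map_add_finrank_ker_inf {K V W : Type*} [Field K] [AddCommGroup V]
    [Module K V] [AddCommGroup W] [Module K W] [FiniteDimensional K V] (g : V →ₗ[K] W)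
    (p : Submodule K V) :
    finrank K (p.map g) + finrank K (ker g ⊓ p : Submodule K V) = finrank K p := by
  have h := finrank_range_add_finrank_ker (g.domRestrict p)
  rwa [range_domRestrict, ker_domRestrict, ← Submodule.finrank_map_subtype_eq,
    Submodule.map_comap_subtype, inf_comm] at h

namespace Module.End

variable {K V : Type*} [Field K] [AddCommGroup V] [Module K V]

theorem ker_pow_inf_range_pow (J : V →ₗ[K] V) (a b : ℕ) :
    ker (J ^ a) ⊓ range (J ^ b) = (ker (J ^ (a + b))).map (J ^ b) := by
  rw [pow_add, mul_eq_comp, ker_comp, Submodule.map_comap_eq, inf_comm]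

variable [FiniteDimensional K V]

theorem finrank_ker_pow_inf_range_pow_add (J : V →ₗ[K] V) (a b : ℕ) :
    finrank K (ker (J ^ a) ⊓ range (J ^ b) : Submodule K V) + finrank K (ker (J ^ b)) =
      finrank K (ker (J ^ (a + b))) := by
  have hle : ker (J ^ b) ≤ ker (J ^ (a + b)) := by
    rw [pow_add, mul_eq_comp]
    exact ker_le_ker_comp _ _
  rw [ker_pow_inf_range_pow, ← inf_eq_left.mpr hle]
  exact Submodule.finrank_map_add_finrank_ker_inf _ _

theorem finrank_ker_inf_range_pow_add (J : V →ₗ[K] V) (k : ℕ) :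
    finrank K (ker J ⊓ range (J ^ k) : Submodule K V) + finrank K (ker (J ^ k)) =
      finrank K (ker (J ^ (k + 1))) := by
  have h := finrank_ker_pow_inf_range_pow_add J 1 k
  rwa [pow_one, add_comm 1 k] at h

theorem finrank_ker_pow_sup_range_add (J : V →ₗ[K] V) (k : ℕ) :
    finrank K (ker (J ^ k) ⊔ range J : Submodule K V) + finrank K (ker (J ^ (k + 1))) =
      finrank K (ker (J ^ k)) + finrank K V := by
  have hinf := finrank_ker_pow_inf_range_pow_add J k 1
  rw [pow_one] at hinf
  have hsup := Submodule.finrank_sup_add_finrank_inf_eq (ker (J ^ k)) (range J)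
  have hJ := finrank_range_add_finrank_ker J
  omega

end Module.End

theorem Function.Injective.sum_mul_tsub_second_difference {ι : Type*} [Fintype ι]
    [DecidableEq ι] {f : ι → ℕ} (hf : f.Injective) (m : ι → ℕ) {i : ι} {k : ℕ}
    (hk : f i = k + 1) :
    ∑ l, m l * (f l - k) + ∑ l, m l * (f l - (k + 1 + 1)) =
      2 * ∑ l, m l * (f l - (k + 1)) + m i := by
  have hpoint : ∀ l, m l * (f l - k) + m l * (f l - (k + 1 + 1)) =
      2 * (m l * (f l - (k + 1))) + if l = i then m l else 0 := by
    intro l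
    have hsecond :
        f l - k + (f l - (k + 1 + 1)) = 2 * (f l - (k + 1)) + if l = i then 1 else 0 := by
      split_ifs with h
      · subst h; omega
      · have := hf.ne h; omega
    rw [← mul_add, hsecond]
    split_ifs <;> ring
  rw [← Finset.sum_add_distrib, Finset.sum_congr rfl fun l _ => hpoint l,
    Finset.sum_add_distrib, Finset.mul_sum, Finset.sum_ite_eq']
  simp

theorem dim_Ui_eq_dim_Wi_general (K V : Type*) [Field K] [AddCommGroup V] [Module K V]
    [FiniteDimensional K V] (J : V →ₗ[K] V) (s : ℕ) (f m : Fin s → ℕ)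
    (hf : StrictAnti f) (hfpos : ∀ i, 0 < f i)
    (hrank : ∀ k : ℕ, finrank K (LinearMap.range (J ^ k)) = ∑ i, m i * (f i - k)) :
    ∀ i : Fin s,
      (finrank K (ker (J ^ f i) ⊔ range J : Submodule K V) =
        finrank K (ker (J ^ (f i - 1)) ⊔ range J : Submodule K V) + m i) ∧
      (finrank K (ker J ⊓ range (J ^ (f i - 1)) : Submodule K V) =
        finrank K (ker J ⊓ range (J ^ f i) : Submodule K V) + m i) := by
  intro i
  obtain ⟨k, hk⟩ : ∃ k, f i = k + 1 := ⟨f i - 1, by have := hfpos i; omega⟩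
  have hm := hf.injective.sum_mul_tsub_second_difference m hk
  rw [← hrank, ← hrank, ← hrank] at hm
  have hd (j : ℕ) := finrank_range_add_finrank_ker (J ^ j)
  have hU (j : ℕ) := End.finrank_ker_pow_sup_range_add J j
  have hW (j : ℕ) := End.finrank_ker_inf_range_pow_add J j
  rw [hk, Nat.add_sub_cancel]
  have := hd k; have := hd (k + 1); have := hd (k + 1 + 1)
  have := hU k; have := hU (k + 1); have := hW k; have := hW (k + 1)
  constructor <;> omega

/-- for `J` nilpotent with distinct Jordan block sizes `f₁ > ⋯ > f_s > 0`
and multiplicities `m₁, …, m_s` (encoded via `rank J^k = ∑ᵢ mᵢ·(fᵢ − k)`), the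
subquotients `U_i = (ker J^{f_i} + im J)/(ker J^{f_i−1} + im J)` and
`W_i = (ker J ∩ im J^{f_i−1})/(ker J ∩ im J^{f_i})` both have dimension `m_i`. -/
theorem dim_Ui_eq_dim_Wi (K V : Type*) [Field K] [AddCommGroup V] [Module K V]
    [FiniteDimensional K V] (J : V →ₗ[K] V) (s : ℕ) (f m : Fin s → ℕ)
    (hf : StrictAnti f) (hfpos : ∀ i, 0 < f i) (hmpos : ∀ i, 0 < m i)
    (hrank : ∀ k : ℕ, finrank K (LinearMap.range (J ^ k)) = ∑ i, m i * (f i - k)) :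
    ∀ i : Fin s,
      (finrank K (ker (J ^ f i) ⊔ range J : Submodule K V) =
        finrank K (ker (J ^ (f i - 1)) ⊔ range J : Submodule K V) + m i) ∧
      (finrank K (ker J ⊓ range (J ^ (f i - 1)) : Submodule K V) =
        finrank K (ker J ⊓ range (J ^ f i) : Submodule K V) + m i) :=
  dim_Ui_eq_dim_Wi_general K V J s f m hf hfpos hrank
end

section
/- Let J be a nilpotent endomorphism of a finite-dimensional vector space V. For each i ≥ 1, there is an exact sequence 0 → (0:J^{i−1})/J(0:J^i) → (0:J^i)/J(0:J^{i+1}) → (ker J ∩ im J^{i−1})/(ker J ∩ im J^i) → 0, where (0:J^k) = ker J^k, and moreover (0:J^i)/J(0:J^{i+1}) ≅ (ker J^i + im J)/im J. -/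
open Module LinearMap

/-! On the subquotients the two maps are `[v] ↦ [v]` and `[v] ↦ [J^{i-1} v]`, so injectivity,
surjectivity and exactness each reduce to a containment of submodules of `V`. These follow from
`J (ker J^{k+1}) = im J ⊓ ker J^k` and `J^k (ker J^{k+1}) = im J^k ⊓ ker J`, together with the
modular law for exactness in the middle. The first identity also makes the isomorphism an instance
of the second isomorphism theorem. -/

namespace Submodule

variable {R M N P : Type*} [Ring R] [AddCommGroup M] [Module R M] [AddCommGroup N] [Module R N]
  [AddCommGroup P] [Module R P]

theorem map_ker_comp (f : M →ₗ[R] N) (g : N →ₗ[R] P) :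
    (ker (g ∘ₗ f)).map f = range f ⊓ ker g := by
  rw [ker_comp, map_comap_eq]

theorem comap_range_comp_le (f : M →ₗ[R] N) (g : N →ₗ[R] P) :
    (range (g ∘ₗ f)).comap g ≤ range f ⊔ ker g := by
  rw [range_comp, comap_map_eq]

theorem mapQ_inclusion_injective {A₁ A₂ S₁ S₂ : Submodule R M} (hA : A₁ ≤ A₂)
    (h₁ : S₁.comap A₁.subtype ≤ (S₂.comap A₂.subtype).comap (inclusion hA))
    (hS : S₂ ⊓ A₁ ≤ S₁) :
    Function.Injective (mapQ (S₁.comap A₁.subtype) (S₂.comap A₂.subtype) (inclusion hA) h₁) := by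
  rw [← ker_eq_bot, ker_mapQ, eq_bot_iff, map_le_iff_le_comap, comap_bot, ker_mkQ]
  rintro a ha
  exact hS ⟨ha, a.2⟩

theorem mapQ_restrict_surjective {A₂ S₂ : Submodule R M} {A₃ S₃ : Submodule R N}
    {g : M →ₗ[R] N} (hg : ∀ v ∈ A₂, g v ∈ A₃)
    (h₂ : S₂.comap A₂.subtype ≤ (S₃.comap A₃.subtype).comap (g.restrict hg))
    (hA : A₃ ≤ A₂.map g) :
    Function.Surjective (mapQ (S₂.comap A₂.subtype) (S₃.comap A₃.subtype) (g.restrict hg) h₂) := by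
  rintro ⟨b⟩
  obtain ⟨a, ha, hab⟩ := hA b.2
  exact ⟨Quotient.mk ⟨a, ha⟩, congrArg Quotient.mk (Subtype.ext hab)⟩

theorem range_mapQ_inclusion_eq_ker_mapQ_restrict {A₁ A₂ S₁ S₂ : Submodule R M}
    {A₃ S₃ : Submodule R N} (hA : A₁ ≤ A₂)
    (h₁ : S₁.comap A₁.subtype ≤ (S₂.comap A₂.subtype).comap (inclusion hA))
    {g : M →ₗ[R] N} (hg : ∀ v ∈ A₂, g v ∈ A₃)
    (h₂ : S₂.comap A₂.subtype ≤ (S₃.comap A₃.subtype).comap (g.restrict hg))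
    (hA₁ : A₁.map g ≤ S₃) (hker : A₂ ⊓ S₃.comap g ≤ A₁ ⊔ S₂) :
    range (mapQ (S₁.comap A₁.subtype) (S₂.comap A₂.subtype) (inclusion hA) h₁) =
      ker (mapQ (S₂.comap A₂.subtype) (S₃.comap A₃.subtype) (g.restrict hg) h₂) := by
  apply le_antisymm
  · rintro _ ⟨⟨c⟩, rfl⟩
    exact (Quotient.mk_eq_zero _).2 (hA₁ ⟨c, c.2, rfl⟩)
  · intro x hx
    obtain ⟨a, rfl⟩ := Quotient.mk_surjective _ x
    rw [mem_ker, mapQ_apply, Quotient.mk_eq_zero] at hx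
    obtain ⟨c, hc, s, hs, hcs⟩ := mem_sup.1 (hker ⟨a.2, hx⟩)
    refine ⟨Quotient.mk ⟨c, hc⟩, (Quotient.eq _).2 ?_⟩
    simpa [← hcs] using neg_mem hs

end Submodule

namespace Module.End

variable {R M : Type*} [Ring R] [AddCommGroup M] [Module R M] (f : Module.End R M) (n : ℕ)

theorem ker_pow_le_ker_pow_succ : ker (f ^ n) ≤ ker (f ^ (n + 1)) := by
  rw [pow_succ', mul_eq_comp]
  exact ker_le_ker_comp _ _

theorem map_ker_pow_succ : (ker (f ^ (n + 1))).map f = range f ⊓ ker (f ^ n) := by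
  rw [pow_succ, mul_eq_comp, Submodule.map_ker_comp]

theorem map_pow_ker_pow_succ : (ker (f ^ (n + 1))).map (f ^ n) = range (f ^ n) ⊓ ker f := by
  rw [pow_succ', mul_eq_comp, Submodule.map_ker_comp]

theorem ker_pow_succ_inf_comap_range_le :
    ker (f ^ (n + 1)) ⊓ (range (f ^ (n + 1))).comap (f ^ n) ≤
      ker (f ^ n) ⊔ (ker (f ^ (n + 2))).map f := by
  calc ker (f ^ (n + 1)) ⊓ (range (f ^ (n + 1))).comap (f ^ n)
      ≤ (ker (f ^ n) ⊔ range f) ⊓ ker (f ^ (n + 1)) := by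
        rw [inf_comm, sup_comm, pow_succ, mul_eq_comp]
        exact inf_le_inf_right _ (Submodule.comap_range_comp_le _ _)
    _ = ker (f ^ n) ⊔ (ker (f ^ (n + 2))).map f := by
        rw [sup_inf_assoc_of_le _ (ker_pow_le_ker_pow_succ f n), map_ker_pow_succ]

end Module.End

open Module.End

theorem exact_sequence_of_nilpotent_general (K V : Type*) [Field K] [AddCommGroup V] [Module K V]
    (J : V →ₗ[K] V) (i : ℕ) (hi : 1 ≤ i) :
    ∀ A₁ A₂ A₃ A₄ : Submodule K V, ∀ S₁ S₂ S₃ S₄ : Submodule K V,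
      A₁ = ker (J ^ (i - 1)) → S₁ = Submodule.map J (ker (J ^ i)) →
      A₂ = ker (J ^ i) → S₂ = Submodule.map J (ker (J ^ (i + 1))) →
      A₃ = ker J ⊓ range (J ^ (i - 1)) → S₃ = ker J ⊓ range (J ^ i) →
      A₄ = ker (J ^ i) ⊔ range J → S₄ = range J →
      ∀ (hA : A₁ ≤ A₂)
        (h₁ : S₁.comap A₁.subtype ≤ (S₂.comap A₂.subtype).comap (Submodule.inclusion hA))
        (hg : ∀ v ∈ A₂, (J ^ (i - 1)) v ∈ A₃)
        (h₂ : S₂.comap A₂.subtype ≤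
          (S₃.comap A₃.subtype).comap ((J ^ (i - 1)).restrict hg)),
        Function.Injective
            (Submodule.mapQ (S₁.comap A₁.subtype) (S₂.comap A₂.subtype)
              (Submodule.inclusion hA) h₁) ∧
        Function.Surjective
            (Submodule.mapQ (S₂.comap A₂.subtype) (S₃.comap A₃.subtype)
              ((J ^ (i - 1)).restrict hg) h₂) ∧
        LinearMap.range
            (Submodule.mapQ (S₁.comap A₁.subtype) (S₂.comap A₂.subtype)
              (Submodule.inclusion hA) h₁) =
          LinearMap.ker
            (Submodule.mapQ (S₂.comap A₂.subtype) (S₃.comap A₃.subtype)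
              ((J ^ (i - 1)).restrict hg) h₂) ∧
        Nonempty ((A₂ ⧸ S₂.comap A₂.subtype) ≃ₗ[K] (A₄ ⧸ S₄.comap A₄.subtype)) := by
  intro A₁ A₂ A₃ A₄ S₁ S₂ S₃ S₄ hA₁ hS₁ hA₂ hS₂ hA₃ hS₃ hA₄ hS₄ hA h₁ hg h₂
  subst hA₁ hS₁ hA₂ hS₂ hA₃ hS₃ hA₄ hS₄
  obtain ⟨n, rfl⟩ : ∃ n, i = n + 1 := ⟨i - 1, by omega⟩
  refine ⟨?_, ?_, ?_, ?_⟩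
  · refine Submodule.mapQ_inclusion_injective hA h₁ ?_
    rw [map_ker_pow_succ, map_ker_pow_succ]
    exact inf_le_inf_right _ inf_le_left
  · exact Submodule.mapQ_restrict_surjective hg h₂
      ((inf_comm _ _).le.trans (map_pow_ker_pow_succ J n).ge)
  · refine Submodule.range_mapQ_inclusion_eq_ker_mapQ_restrict hA h₁ hg h₂ ?_ ?_
    · exact Submodule.map_le_iff_le_comap.2 (ker_le_comap _)
    · exact (inf_le_inf_left _ (Submodule.comap_mono inf_le_right)).trans
        (ker_pow_succ_inf_comap_range_le J n)
  · refine ⟨(Submodule.quotEquivOfEq _ _ ?_).trans (quotientInfEquivSupQuotient _ _)⟩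
    rw [map_ker_pow_succ, Submodule.comap_inf, inf_comm]

/-- for `J` nilpotent and `i ≥ 1` there is an exact sequence
`0 → (0:J^{i−1})/J(0:J^i) → (0:J^i)/J(0:J^{i+1}) → (ker J ∩ im J^{i−1})/(ker J ∩ im J^i) → 0`,
where the first map is induced by the inclusion `ker J^{i-1} ⊆ ker J^i` and the second by
`J^{i-1}`; moreover `(0:J^i)/J(0:J^{i+1}) ≅ (ker J^i + im J)/im J`. -/
theorem exact_sequence_of_nilpotent (K V : Type*) [Field K] [AddCommGroup V] [Module K V]
    [FiniteDimensional K V] (J : V →ₗ[K] V) (hJ : IsNilpotent J) (i : ℕ) (hi : 1 ≤ i) :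
    ∀ A₁ A₂ A₃ A₄ : Submodule K V, ∀ S₁ S₂ S₃ S₄ : Submodule K V,
      A₁ = ker (J ^ (i - 1)) → S₁ = Submodule.map J (ker (J ^ i)) →
      A₂ = ker (J ^ i) → S₂ = Submodule.map J (ker (J ^ (i + 1))) →
      A₃ = ker J ⊓ range (J ^ (i - 1)) → S₃ = ker J ⊓ range (J ^ i) →
      A₄ = ker (J ^ i) ⊔ range J → S₄ = range J →
      ∀ (hA : A₁ ≤ A₂)
        (h₁ : S₁.comap A₁.subtype ≤ (S₂.comap A₂.subtype).comap (Submodule.inclusion hA))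
        (hg : ∀ v ∈ A₂, (J ^ (i - 1)) v ∈ A₃)
        (h₂ : S₂.comap A₂.subtype ≤
          (S₃.comap A₃.subtype).comap ((J ^ (i - 1)).restrict hg)),
        Function.Injective
            (Submodule.mapQ (S₁.comap A₁.subtype) (S₂.comap A₂.subtype)
              (Submodule.inclusion hA) h₁) ∧
        Function.Surjective
            (Submodule.mapQ (S₂.comap A₂.subtype) (S₃.comap A₃.subtype)
              ((J ^ (i - 1)).restrict hg) h₂) ∧
        LinearMap.range
            (Submodule.mapQ (S₁.comap A₁.subtype) (S₂.comap A₂.subtype)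
              (Submodule.inclusion hA) h₁) =
          LinearMap.ker
            (Submodule.mapQ (S₂.comap A₂.subtype) (S₃.comap A₃.subtype)
              ((J ^ (i - 1)).restrict hg) h₂) ∧
        Nonempty ((A₂ ⧸ S₂.comap A₂.subtype) ≃ₗ[K] (A₄ ⧸ S₄.comap A₄.subtype)) :=
  exact_sequence_of_nilpotent_general K V J i hi
end

section
/- Let A be an Artinian Gorenstein local (or graded) K-algebra and z ∈ A a non-unit. Let U_i and W_i (i = 1,…,s) be the subquotients defined from the nilpotent endomorphism ×z on A by U_i = (0:z^{f_i} + (z))/(0:z^{f_i−1} + (z)) and W_i = ((0:z) ∩ (z^{f_i−1}))/((0:z) ∩ (z^{f_i})), where f₁ > ⋯ > f_s are the distinct Jordan block sizes of ×z. Then Hom_A(U_i, A) ≅ W_i and Hom_A(W_i, A) ≅ U_i; in particular Hom_A(U_i, A) ≅ U_i. -/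
/-!
Multiplication pairs a subquotient `I / J` of ideals with `ann J / ann I`. Over a self-injective
ring every linear map from an ideal to `A` is multiplication by an element (extend it to `A`), so
this pairing identifies `Hom_A(I / J, A)` with `ann J / ann I`. The same extension argument shows
`ann (0 : w) = (w)`, hence `ann ((0 : z^k) + (z)) = (0 : z) ∩ (z^k)`, and therefore
`Hom_A(U_i, A) ≅ W_i`. On the other hand multiplication by `z^(f_i - 1)` maps `(0 : z^(f_i))` onto
`W_i` with kernel `(0 : z^(f_i)) ∩ ((0 : z^(f_i - 1)) + (z))`, so `U_i ≅ W_i` by the second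
isomorphism theorem; the two remaining isomorphisms follow.
-/

open Module LinearMap

namespace Ideal

variable {A : Type*} [CommRing A]

theorem exists_mul_eq_of_injective [Module.Injective A A] (I : Ideal A) (φ : I →ₗ[A] A) :
    ∃ c : A, ∀ x : I, φ x = c * x := by
  obtain ⟨ψ, hψ⟩ := Module.Injective.out I.subtype I.injective_subtype φ
  refine ⟨ψ 1, fun x => ?_⟩
  rw [← hψ x, mul_comm, ← smul_eq_mul, ← map_smul, smul_eq_mul, mul_one, Submodule.subtype_apply]

theorem annihilator_span_singleton_eq_ker_lsmul (w : A) :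
    (span {w}).annihilator = ker (lsmul A A w) := by
  ext a
  rw [← submodule_span_eq, Submodule.mem_annihilator_span_singleton, mem_ker, lsmul_apply,
    smul_eq_mul, smul_eq_mul, mul_comm]

theorem annihilator_ker_lsmul [Module.Injective A A] (w : A) :
    (ker (lsmul A A w)).annihilator = span {w} := by
  refine le_antisymm (fun a ha => ?_) ?_
  · let φ : range (lsmul A A w) →ₗ[A] A :=
      (ker (lsmul A A w)).liftQ (lsmul A A a)
          (fun x hx => mem_ker.2 (Submodule.mem_annihilator.1 ha x hx)) ∘ₗ
        (lsmul A A w).quotKerEquivRange.symm.toLinearMap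
    obtain ⟨c, hc⟩ := exists_mul_eq_of_injective _ φ
    have hφ : φ ⟨lsmul A A w 1, mem_range_self _ 1⟩ = lsmul A A a 1 := by
      simp only [φ, LinearMap.comp_apply, LinearEquiv.coe_coe, quotKerEquivRange_symm_apply_image,
        Submodule.mkQ_apply, Submodule.liftQ_apply]
    refine mem_span_singleton'.2 ⟨c, ?_⟩
    simpa [hc] using hφ
  · rw [span_le, Set.singleton_subset_iff, SetLike.mem_coe, Submodule.mem_annihilator]
    exact fun x hx => hx

theorem annihilator_ker_lsmul_sup_span [Module.Injective A A] (w z : A) :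
    (ker (lsmul A A w) ⊔ span {z}).annihilator = ker (lsmul A A z) ⊓ span {w} := by
  rw [Submodule.annihilator_sup, annihilator_ker_lsmul, annihilator_span_singleton_eq_ker_lsmul,
    inf_comm]

variable (I J : Ideal A)

def annihilatorToDual : J.annihilator →ₗ[A] ((I ⧸ Submodule.comap I.subtype J) →ₗ[A] A) :=
  ((Submodule.comap I.subtype J).liftQ
    ((LinearMap.mul A A).compl₁₂ I.subtype J.annihilator.subtype) fun x hx => by
    ext a
    simpa [mul_comm] using Submodule.mem_annihilator.1 a.2 x hx).flip

@[simp]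
theorem annihilatorToDual_apply_mk (a : J.annihilator) (x : I) :
    annihilatorToDual I J a (Submodule.Quotient.mk x) = (x : A) * a := rfl

theorem ker_annihilatorToDual :
    ker (annihilatorToDual I J) = Submodule.comap J.annihilator.subtype I.annihilator := by
  ext a
  rw [mem_ker, Submodule.mem_comap, Submodule.mem_annihilator]
  constructor
  · intro h x hx
    simpa [mul_comm] using DFunLike.congr_fun h (Submodule.Quotient.mk ⟨x, hx⟩)
  · intro h
    ext x
    simpa [mul_comm] using h x x.2

theorem annihilatorToDual_surjective [Module.Injective A A] (h : J ≤ I) :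
    Function.Surjective (annihilatorToDual I J) := by
  intro φ
  obtain ⟨c, hc⟩ := exists_mul_eq_of_injective I (φ ∘ₗ (Submodule.comap I.subtype J).mkQ)
  have hcJ : c ∈ J.annihilator := Submodule.mem_annihilator.2 fun x hx => by
    have hx0 : (Submodule.Quotient.mk ⟨x, h hx⟩ : I ⧸ Submodule.comap I.subtype J) = 0 :=
      (Submodule.Quotient.mk_eq_zero _).2 hx
    simpa [hx0] using (hc ⟨x, h hx⟩).symm
  refine ⟨⟨c, hcJ⟩, ?_⟩
  ext x
  simpa [mul_comm] using (hc x).symm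

variable {I J} in
noncomputable def dualSubquotientEquiv [Module.Injective A A] (h : J ≤ I) :
    ((I ⧸ Submodule.comap I.subtype J) →ₗ[A] A) ≃ₗ[A]
      (J.annihilator ⧸ Submodule.comap J.annihilator.subtype I.annihilator) :=
  ((Submodule.quotEquivOfEq _ _ (ker_annihilatorToDual I J).symm).trans
    ((annihilatorToDual I J).quotKerEquivOfSurjective (annihilatorToDual_surjective I J h))).symm

theorem pow_mul_mem_span_pow_succ_iff (z x : A) (g : ℕ) :
    z ^ g * x ∈ span {z ^ (g + 1)} ↔ x ∈ ker (lsmul A A (z ^ g)) ⊔ span {z} := by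
  rw [mem_span_singleton', Submodule.mem_sup]
  constructor
  · rintro ⟨c, hc⟩
    refine ⟨x - c * z, ?_, c * z, mem_span_singleton'.2 ⟨c, rfl⟩, sub_add_cancel x _⟩
    rw [mem_ker, lsmul_apply, smul_eq_mul, mul_sub, ← hc]
    ring
  · rintro ⟨u, hu, v, hv, rfl⟩
    obtain ⟨c, rfl⟩ := mem_span_singleton'.1 hv
    rw [mem_ker, lsmul_apply, smul_eq_mul] at hu
    exact ⟨c, by rw [mul_add, hu]; ring⟩

theorem ker_lsmul_pow_mono (z : A) {m n : ℕ} (h : m ≤ n) :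
    ker (lsmul A A (z ^ m)) ≤ ker (lsmul A A (z ^ n)) := fun x hx => by
  rw [mem_ker, lsmul_apply, smul_eq_mul] at hx ⊢
  rw [← Nat.sub_add_cancel h, pow_add, mul_assoc, hx, mul_zero]

variable (z : A) (g : ℕ)

theorem lsmul_pow_mem_ker_inf_span (x : ker (lsmul A A (z ^ (g + 1)))) :
    lsmul A A (z ^ g) x ∈ ker (lsmul A A z) ⊓ span {z ^ g} := by
  refine ⟨?_, mem_span_singleton'.2 ⟨x, mul_comm _ _⟩⟩
  have hx : z ^ (g + 1) * x = 0 := x.2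
  rw [SetLike.mem_coe, mem_ker, lsmul_apply, lsmul_apply, smul_eq_mul, smul_eq_mul, ← mul_assoc,
    ← pow_succ', hx]

noncomputable def mulPowToSubquotient :
    ker (lsmul A A (z ^ (g + 1))) →ₗ[A]
      (ker (lsmul A A z) ⊓ span {z ^ g} : Ideal A) ⧸
        Submodule.comap (ker (lsmul A A z) ⊓ span {z ^ g} : Ideal A).subtype
          (ker (lsmul A A z) ⊓ span {z ^ (g + 1)}) :=
  Submodule.mkQ _ ∘ₗ
    codRestrict _ (lsmul A A (z ^ g) ∘ₗ Submodule.subtype _) (lsmul_pow_mem_ker_inf_span z g)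

theorem mulPowToSubquotient_apply (x : ker (lsmul A A (z ^ (g + 1)))) :
    mulPowToSubquotient z g x =
      Submodule.Quotient.mk ⟨lsmul A A (z ^ g) x, lsmul_pow_mem_ker_inf_span z g x⟩ :=
  rfl

theorem mulPowToSubquotient_surjective : Function.Surjective (mulPowToSubquotient z g) := by
  intro q
  obtain ⟨⟨w, hwz, hw⟩, rfl⟩ := Submodule.Quotient.mk_surjective _ q
  obtain ⟨c, rfl⟩ := mem_span_singleton'.1 hw
  have hc : c ∈ ker (lsmul A A (z ^ (g + 1))) := by
    rw [SetLike.mem_coe, mem_ker, lsmul_apply, smul_eq_mul] at hwz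
    rw [mem_ker, lsmul_apply, smul_eq_mul, pow_succ', mul_assoc, mul_comm _ c, hwz]
  exact ⟨⟨c, hc⟩, congrArg Submodule.Quotient.mk (Subtype.ext (mul_comm _ _))⟩

theorem ker_mulPowToSubquotient :
    ker (mulPowToSubquotient z g) =
      Submodule.comap (Submodule.subtype _) (ker (lsmul A A (z ^ g)) ⊔ span {z}) := by
  ext x
  rw [mem_ker, mulPowToSubquotient_apply, Submodule.Quotient.mk_eq_zero]
  simp only [Submodule.mem_comap, Submodule.subtype_apply, Submodule.mem_inf]
  rw [and_iff_right (Submodule.mem_inf.1 (lsmul_pow_mem_ker_inf_span z g x)).1, lsmul_apply,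
    smul_eq_mul, pow_mul_mem_span_pow_succ_iff]

noncomputable def mulPowSubquotientEquiv :
    ((ker (lsmul A A (z ^ (g + 1))) ⊔ span {z} : Ideal A) ⧸
        Submodule.comap (ker (lsmul A A (z ^ (g + 1))) ⊔ span {z} : Ideal A).subtype
          (ker (lsmul A A (z ^ g)) ⊔ span {z})) ≃ₗ[A]
      ((ker (lsmul A A z) ⊓ span {z ^ g} : Ideal A) ⧸
        Submodule.comap (ker (lsmul A A z) ⊓ span {z ^ g} : Ideal A).subtype
          (ker (lsmul A A z) ⊓ span {z ^ (g + 1)})) := by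
  rw [show ker (lsmul A A (z ^ (g + 1))) ⊔ span {z} =
      ker (lsmul A A (z ^ (g + 1))) ⊔ (ker (lsmul A A (z ^ g)) ⊔ span {z}) by
    rw [← sup_assoc, sup_eq_left.2 (ker_lsmul_pow_mono z g.le_succ)]]
  exact (quotientInfEquivSupQuotient _ _).symm ≪≫ₗ
    Submodule.quotEquivOfEq _ _ (by
      rw [ker_mulPowToSubquotient, Submodule.comap_subtype_self, top_inf_eq]) ≪≫ₗ
    (mulPowToSubquotient z g).quotKerEquivOfSurjective (mulPowToSubquotient_surjective z g)

end Ideal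

theorem gorenstein_duality_central_modules_general (A : Type*) [CommRing A]
    [Module.Injective A A]
    (z : A) (s : ℕ) (f : Fin s → ℕ)
    (hfpos : ∀ i, 0 < f i) :
    ∀ i : Fin s, ∀ AU BU AW BW : Ideal A,
      AU = ker (LinearMap.lsmul A A (z ^ f i)) ⊔ Ideal.span {z} →
      BU = ker (LinearMap.lsmul A A (z ^ (f i - 1))) ⊔ Ideal.span {z} →
      AW = ker (LinearMap.lsmul A A z) ⊓ Ideal.span {z ^ (f i - 1)} →
      BW = ker (LinearMap.lsmul A A z) ⊓ Ideal.span {z ^ f i} →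
      Nonempty (((AU ⧸ Submodule.comap AU.subtype BU) →ₗ[A] A) ≃ₗ[A] (AW ⧸ Submodule.comap AW.subtype BW)) ∧
      Nonempty (((AW ⧸ Submodule.comap AW.subtype BW) →ₗ[A] A) ≃ₗ[A] (AU ⧸ Submodule.comap AU.subtype BU)) ∧
      Nonempty (((AU ⧸ Submodule.comap AU.subtype BU) →ₗ[A] A) ≃ₗ[A] (AU ⧸ Submodule.comap AU.subtype BU)) := by
  intro i AU BU AW BW hAU hBU hAW hBW
  obtain ⟨g, hg⟩ := Nat.exists_eq_add_one.2 (hfpos i)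
  simp only [hg, Nat.add_sub_cancel] at hAU hBU hAW hBW
  have e : (AU ⧸ Submodule.comap AU.subtype BU) ≃ₗ[A] (AW ⧸ Submodule.comap AW.subtype BW) := by
    subst hAU hBU hAW hBW
    exact Ideal.mulPowSubquotientEquiv z g
  have hle : BU ≤ AU := by
    rw [hAU, hBU]
    exact sup_le_sup_right (Ideal.ker_lsmul_pow_mono z g.le_succ) _
  have dual :
      ((AU ⧸ Submodule.comap AU.subtype BU) →ₗ[A] A) ≃ₗ[A]
        (AW ⧸ Submodule.comap AW.subtype BW) := by
    rw [hAW, hBW, ← Ideal.annihilator_ker_lsmul_sup_span, ← Ideal.annihilator_ker_lsmul_sup_span,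
      ← hAU, ← hBU]
    exact Ideal.dualSubquotientEquiv hle
  exact ⟨⟨dual⟩, ⟨e.symm.arrowCongr (.refl A A) ≪≫ₗ dual ≪≫ₗ e.symm⟩, ⟨dual ≪≫ₗ e.symm⟩⟩

/-- Let `A` be an Artinian Gorenstein `K`-algebra (finite-dimensional over
`K` and self-injective) and `z ∈ A` a non-unit, with `f₁ > ⋯ > f_s > 0` the distinct
Jordan block sizes of `×z` (multiplicities `m₁, …, m_s`, encoded via ranks of powers).
With `U_i = (0:z^{f_i} + (z))/(0:z^{f_i−1} + (z))` and
`W_i = ((0:z) ∩ (z^{f_i−1}))/((0:z) ∩ (z^{f_i}))`, we have `Hom_A(U_i, A) ≅ W_i`,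
`Hom_A(W_i, A) ≅ U_i`, and in particular `Hom_A(U_i, A) ≅ U_i`. -/
theorem gorenstein_duality_central_modules (K A : Type*) [Field K] [CommRing A]
    [Algebra K A] [FiniteDimensional K A] [Module.Injective A A]
    (z : A) (hz : ¬IsUnit z) (s : ℕ) (f m : Fin s → ℕ)
    (hf : StrictAnti f) (hfpos : ∀ i, 0 < f i) (hmpos : ∀ i, 0 < m i)
    (hrank : ∀ k : ℕ,
      finrank K (LinearMap.range ((Algebra.lmul K A z) ^ k)) = ∑ i, m i * (f i - k)) :
    ∀ i : Fin s, ∀ AU BU AW BW : Ideal A,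
      AU = ker (LinearMap.lsmul A A (z ^ f i)) ⊔ Ideal.span {z} →
      BU = ker (LinearMap.lsmul A A (z ^ (f i - 1))) ⊔ Ideal.span {z} →
      AW = ker (LinearMap.lsmul A A z) ⊓ Ideal.span {z ^ (f i - 1)} →
      BW = ker (LinearMap.lsmul A A z) ⊓ Ideal.span {z ^ f i} →
      Nonempty (((AU ⧸ Submodule.comap AU.subtype BU) →ₗ[A] A) ≃ₗ[A] (AW ⧸ Submodule.comap AW.subtype BW)) ∧
      Nonempty (((AW ⧸ Submodule.comap AW.subtype BW) →ₗ[A] A) ≃ₗ[A] (AU ⧸ Submodule.comap AU.subtype BU)) ∧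
      Nonempty (((AU ⧸ Submodule.comap AU.subtype BU) →ₗ[A] A) ≃ₗ[A] (AU ⧸ Submodule.comap AU.subtype BU)) :=
  gorenstein_duality_central_modules_general A z s f hfpos
end

section
/- Let J be a nilpotent matrix with distinct Jordan block sizes f₁ > ⋯ > f_s with multiplicities m₁,…,m_s, and let M ∈ C(J) be such that M̂ is zero outside the coarse diagonal blocks N₁,…,N_p, with G₁,…,G_s the fine diagonal blocks of N₁. Then rank(M̂ + Ĵ) ≥ rank(G₁^{f₁}) + ⋯ + rank(G_s^{f_s}) + rank(J). -/
/-!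
Order the boxes block by block. The commutation `M J = J M` slides an entry of `M` one step
along both of its boxes, so, as `M` only links boxes in the same column, the entry
`M ⟨i, b, a⟩ ⟨j, c, a⟩` does not depend on `a` and vanishes once `f i < f j`. Hence `M + J` is
block upper triangular, with diagonal blocks `G_t ⊗ 1 + 1 ⊗ N_{f_t}`, `N_n` the nilpotent Jordan
block of size `n`. The nullity of a block triangular matrix is at most the sum of the nullities of
its diagonal blocks, and a kernel vector `v` of `G ⊗ 1 + 1 ⊗ N_n` has slices `v_a = (-G)^a v_0`
with `G^n v_0 = 0`, so it is determined by `v_0 ∈ ker G^n`. Finally the last row of every Jordan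
block is zero, so `rank J ≤ Σ m_t (f_t - 1)`, and rank–nullity turns the bound on the nullity of
`M + J` into the claim.
-/

open Matrix Module
open scoped Kronecker

theorem Submodule.finrank_le_add_of_map_le_of_inf_ker_le {K V W : Type*} [DivisionRing K]
    [AddCommGroup V] [Module K V] [FiniteDimensional K V]
    [AddCommGroup W] [Module K W] [FiniteDimensional K W]
    {p r : Submodule K V} {q : Submodule K W} (ρ : V →ₗ[K] W)
    (hq : p.map ρ ≤ q) (hr : p ⊓ LinearMap.ker ρ ≤ r) :
    finrank K p ≤ finrank K q + finrank K r := by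
  have hker : finrank K (LinearMap.ker (ρ.domRestrict p)) =
      finrank K (p ⊓ LinearMap.ker ρ : Submodule K V) := by
    rw [LinearMap.ker_domRestrict, ← Submodule.map_comap_subtype,
      Submodule.finrank_map_subtype_eq]
  have := (ρ.domRestrict p).finrank_range_add_finrank_ker
  rw [LinearMap.range_domRestrict, hker] at this
  have := Submodule.finrank_mono hq
  have := Submodule.finrank_mono hr
  omega

section

variable {K : Type*} [Field K]

theorem Matrix.rank_add_finrank_ker_mulVecLin {n : Type*} [Fintype n] (A : Matrix n n K) :
    A.rank + finrank K (LinearMap.ker A.mulVecLin) = Fintype.card n := by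
  rw [Matrix.rank, LinearMap.finrank_range_add_finrank_ker, finrank_fintype_fun_eq_card]

section BlockTriangular

variable {ι : Type*} {β : ι → Type*}

variable (K β) in
def blockSupported (S : Finset ι) : Submodule K ((Σ i, β i) → K) :=
  Submodule.pi {x | x.1 ∉ S} fun _ => ⊥

theorem mem_blockSupported {S : Finset ι} {u : (Σ i, β i) → K} :
    u ∈ blockSupported K β S ↔ ∀ x : Σ i, β i, x.1 ∉ S → u x = 0 := by
  simp [blockSupported]

theorem Matrix.BlockTriangular.submatrix_mulVec_eq_zero_of_mulVec_eq_zero [LinearOrder ι]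
    [Fintype ι] [∀ i, Fintype (β i)] {T : Matrix (Σ i, β i) (Σ i, β i) K}
    (hT : T.BlockTriangular Sigma.fst) {u : (Σ i, β i) → K} (hu : T *ᵥ u = 0) {a : ι}
    (hsupp : ∀ x : Σ i, β i, a < x.1 → u x = 0) :
    T.submatrix (Sigma.mk a) (Sigma.mk a) *ᵥ (fun b => u ⟨a, b⟩) = 0 := by
  funext b
  have hrow := congrFun hu ⟨a, b⟩
  rw [mulVec, dotProduct, Fintype.sum_sigma, Finset.sum_eq_single a] at hrow
  · exact hrow
  · intro j _ hja
    refine Finset.sum_eq_zero fun c _ => ?_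
    rcases hja.lt_or_gt with hj | hj
    · rw [hT hj, zero_mul]
    · rw [hsupp ⟨j, c⟩ hj, mul_zero]
  · simp

theorem Matrix.BlockTriangular.finrank_ker_le_sum [LinearOrder ι] [Fintype ι]
    [∀ i, Fintype (β i)] {T : Matrix (Σ i, β i) (Σ i, β i) K}
    (hT : T.BlockTriangular Sigma.fst) :
    finrank K (LinearMap.ker T.mulVecLin) ≤
      ∑ i, finrank K (LinearMap.ker (T.submatrix (Sigma.mk i) (Sigma.mk i)).mulVecLin) := by
  suffices h : ∀ S : Finset ι, finrank K (LinearMap.ker T.mulVecLin ⊓ blockSupported K β S :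
      Submodule K _) ≤
      ∑ i ∈ S, finrank K (LinearMap.ker (T.submatrix (Sigma.mk i) (Sigma.mk i)).mulVecLin) by
    have hall : blockSupported K β (Finset.univ : Finset ι) = ⊤ := by
      ext u; simp [mem_blockSupported]
    have h' := h Finset.univ
    rwa [hall, inf_top_eq] at h'
  intro S
  induction S using Finset.induction_on_max with
  | empty =>
    have hbot : blockSupported K β ∅ = ⊥ := by
      ext u; simp [mem_blockSupported, funext_iff]
    simp [hbot]
  | insert a S hlt ih =>
    rw [Finset.sum_insert fun ha => (hlt a ha).false]
    refine (Submodule.finrank_le_add_of_map_le_of_inf_ker_le (LinearMap.funLeft K K (Sigma.mk a))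
      ?_ ?_).trans (Nat.add_le_add_left ih _)
    · rintro _ ⟨u, ⟨hu, hsupp⟩, rfl⟩
      rw [SetLike.mem_coe, mem_blockSupported] at hsupp
      refine hT.submatrix_mulVec_eq_zero_of_mulVec_eq_zero hu fun x hx => hsupp x ?_
      simp only [Finset.mem_insert, not_or]
      exact ⟨hx.ne', fun hxS => (hlt _ hxS).not_gt hx⟩
    · rintro u ⟨⟨hu, hsupp⟩, hua⟩
      refine ⟨hu, mem_blockSupported.2 fun x hx => ?_⟩
      rw [SetLike.mem_coe, mem_blockSupported] at hsupp
      by_cases hxa : x.1 = a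
      · obtain ⟨i, b⟩ := x
        subst hxa
        exact congrFun hua b
      · exact hsupp x (by simp [hx, hxa])

end BlockTriangular

def nilpotentJordanBlock (R : Type*) [Zero R] [One R] (n : ℕ) : Matrix (Fin n) (Fin n) R :=
  fun a a' => if (a' : ℕ) = a + 1 then 1 else 0

theorem nilpotentJordanBlock_mulVec_apply {n : ℕ} (w : Fin n → K) (a : Fin n) :
    (nilpotentJordanBlock K n *ᵥ w) a = if h : (a : ℕ) + 1 < n then w ⟨a + 1, h⟩ else 0 := by
  simp only [mulVec, dotProduct, nilpotentJordanBlock, ite_mul, one_mul, zero_mul]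
  split_ifs with h
  · have hiff : ∀ a' : Fin n, (a' : ℕ) = a + 1 ↔ a' = ⟨a + 1, h⟩ := fun a' => by rw [Fin.ext_iff]
    simp_rw [hiff, Finset.sum_ite_eq', Finset.mem_univ, if_true]
  · exact Finset.sum_eq_zero fun a' _ => if_neg (by omega)

section KroneckerSum

variable {β : Type*} [Fintype β] [DecidableEq β] {G : Matrix β β K} {n : ℕ}

theorem kroneckerSum_mulVec_apply (v : β × Fin n → K) (b : β) (a : Fin n) :
    ((G ⊗ₖ 1 + 1 ⊗ₖ nilpotentJordanBlock K n) *ᵥ v) (b, a) =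
      (G *ᵥ fun c => v (c, a)) b + if h : (a : ℕ) + 1 < n then v (b, ⟨a + 1, h⟩) else 0 := by
  rw [add_mulVec, Pi.add_apply, ← nilpotentJordanBlock_mulVec_apply (fun a' => v (b, a'))]
  simp [mulVec, dotProduct, kroneckerMap_apply, Fintype.sum_prod_type, one_apply]

theorem slice_eq_pow_mulVec_of_kroneckerSum_mulVec_eq_zero {v : β × Fin n → K}
    (hv : (G ⊗ₖ 1 + 1 ⊗ₖ nilpotentJordanBlock K n) *ᵥ v = 0) (a : ℕ) (ha : a < n) :
    (fun b => v (b, ⟨a, ha⟩)) = (-G) ^ a *ᵥ fun b => v (b, ⟨0, by omega⟩) := by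
  induction a with
  | zero => simp
  | succ a ih =>
    funext b
    have hrow := congrFun hv (b, ⟨a, by omega⟩)
    rw [kroneckerSum_mulVec_apply, dif_pos ha, ih (by omega), Pi.zero_apply] at hrow
    rw [pow_succ', ← mulVec_mulVec, neg_mulVec, Pi.neg_apply]
    exact eq_neg_of_add_eq_zero_right hrow

theorem pow_mulVec_eq_zero_of_kroneckerSum_mulVec_eq_zero {v : β × Fin n → K}
    (hv : (G ⊗ₖ 1 + 1 ⊗ₖ nilpotentJordanBlock K n) *ᵥ v = 0) (hn : 0 < n) :
    G ^ n *ᵥ (fun b => v (b, ⟨0, hn⟩)) = 0 := by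
  have hlast : (-G) ^ n *ᵥ (fun b => v (b, ⟨0, hn⟩)) = 0 := by
    funext b
    have hrow := congrFun hv (b, ⟨n - 1, by omega⟩)
    rw [kroneckerSum_mulVec_apply, dif_neg (by dsimp only; omega), add_zero,
      slice_eq_pow_mulVec_of_kroneckerSum_mulVec_eq_zero hv] at hrow
    obtain ⟨k, rfl⟩ : ∃ k, n = k + 1 := ⟨n - 1, by omega⟩
    rw [pow_succ', ← mulVec_mulVec, neg_mulVec, Pi.neg_apply, Pi.zero_apply]
    simpa using hrow
  rw [← neg_neg G, neg_pow (-G), ← mulVec_mulVec, hlast, mulVec_zero]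

variable (G n) in
theorem finrank_ker_kroneckerSum_le :
    finrank K (LinearMap.ker (G ⊗ₖ 1 + 1 ⊗ₖ nilpotentJordanBlock K n).mulVecLin) ≤
      finrank K (LinearMap.ker (G ^ n).mulVecLin) := by
  rcases Nat.eq_zero_or_pos n with rfl | hn
  · refine (Submodule.finrank_le _).trans ?_
    simp
  let φ := LinearMap.funLeft K K fun b : β => (b, (⟨0, hn⟩ : Fin n))
  have hmaps : ∀ v : LinearMap.ker (G ⊗ₖ 1 + 1 ⊗ₖ nilpotentJordanBlock K n).mulVecLin,
      φ v ∈ LinearMap.ker (G ^ n).mulVecLin := fun v =>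
    pow_mulVec_eq_zero_of_kroneckerSum_mulVec_eq_zero v.2 hn
  refine LinearMap.finrank_le_finrank_of_injective
    (f := (φ.domRestrict _).codRestrict _ hmaps) fun v w hvw => ?_
  have h0 : (fun b => (v : β × Fin n → K) (b, ⟨0, hn⟩)) =
      fun b => (w : β × Fin n → K) (b, ⟨0, hn⟩) :=
    congrArg Subtype.val hvw
  ext ⟨b, a, ha⟩
  have hv := slice_eq_pow_mulVec_of_kroneckerSum_mulVec_eq_zero v.2 a ha
  have hw := slice_eq_pow_mulVec_of_kroneckerSum_mulVec_eq_zero w.2 a ha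
  rw [h0, ← hw] at hv
  exact congrFun hv b

end KroneckerSum

section Jordan

variable {s : ℕ} {f m : Fin s → ℕ}
  {J : Matrix (Σ i : Fin s, Fin (m i) × Fin (f i)) (Σ i : Fin s, Fin (m i) × Fin (f i)) K}
  (hJ : ∀ x y : Σ i : Fin s, Fin (m i) × Fin (f i),
      J x y = if x.1 = y.1 ∧ (x.2.1 : ℕ) = (y.2.1 : ℕ) ∧ (y.2.2 : ℕ) = (x.2.2 : ℕ) + 1
        then 1 else 0)
include hJ

theorem jordan_mulVec_apply (v : (Σ i : Fin s, Fin (m i) × Fin (f i)) → K) (i : Fin s)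
    (b : Fin (m i)) (a : Fin (f i)) :
    (J *ᵥ v) ⟨i, b, a⟩ = if h : (a : ℕ) + 1 < f i then v ⟨i, b, ⟨a + 1, h⟩⟩ else 0 := by
  rw [← nilpotentJordanBlock_mulVec_apply (fun d => v ⟨i, b, d⟩)]
  simp only [mulVec, dotProduct, hJ, Fintype.sum_sigma, Fintype.sum_prod_type]
  rw [Finset.sum_eq_single i]
  · simp only [Fin.val_eq_val, true_and, ite_and]
    rw [Finset.sum_comm]
    simp [nilpotentJordanBlock]
  · intro j _ hji
    simp [Ne.symm hji]
  · simp

theorem vecMul_jordan_apply_succ (w : (Σ i : Fin s, Fin (m i) × Fin (f i)) → K) (j : Fin s)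
    (c : Fin (m j)) (d : ℕ) (hd : d + 1 < f j) :
    (w ᵥ* J) ⟨j, c, ⟨d + 1, hd⟩⟩ = w ⟨j, c, ⟨d, by omega⟩⟩ := by
  simp only [vecMul, dotProduct, hJ, Fintype.sum_sigma, Fintype.sum_prod_type]
  rw [Finset.sum_eq_single j]
  · have hiff : ∀ a : Fin (f j), d + 1 = (a : ℕ) + 1 ↔ ⟨d, by omega⟩ = a := fun a => by
      simp [Fin.ext_iff, eq_comm]
    simp only [Fin.val_eq_val, true_and, ite_and, mul_ite, mul_one, mul_zero, hiff,
      Finset.sum_ite_irrel, Finset.sum_const_zero, Finset.sum_ite_eq', Finset.sum_ite_eq,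
      Finset.mem_univ, if_true]
  · intro i _ hij
    simp [hij]
  · simp

theorem blockTriangular_jordan : J.BlockTriangular Sigma.fst := fun x y hyx => by
  rw [hJ, if_neg fun h => hyx.ne' h.1]

theorem submatrix_jordan (t : Fin s) :
    J.submatrix (Sigma.mk t) (Sigma.mk t) = 1 ⊗ₖ nilpotentJordanBlock K (f t) := by
  ext ⟨b, a⟩ ⟨c, a'⟩
  simp [hJ, kroneckerMap_apply, one_apply, nilpotentJordanBlock, Fin.val_eq_val, ← ite_and,
    and_comm]

theorem rank_jordan_add_sum_le (hfpos : ∀ i, 0 < f i) :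
    J.rank + ∑ i, m i ≤ Fintype.card (Σ i : Fin s, Fin (m i) × Fin (f i)) := by
  let last : (Σ i : Fin s, Fin (m i)) → Σ i : Fin s, Fin (m i) × Fin (f i) :=
    Sigma.map id fun i b => (b, ⟨f i - 1, Nat.sub_lt (hfpos i) Nat.one_pos⟩)
  have hlast : last.Injective :=
    Function.injective_id.sigma_map fun i => Prod.mk_left_injective _
  let π := LinearMap.funLeft K K last
  have hrange : LinearMap.range J.mulVecLin ≤ LinearMap.ker π := by
    rintro _ ⟨v, rfl⟩
    ext ⟨i, b⟩
    rw [LinearMap.funLeft_apply, mulVecLin_apply, jordan_mulVec_apply hJ,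
      dif_neg (by simp [Sigma.map]; omega)]
    rfl
  have hπ := π.finrank_range_add_finrank_ker
  rw [LinearMap.range_eq_top.2 (LinearMap.funLeft_surjective_of_injective _ _ _ hlast),
    finrank_top, finrank_fintype_fun_eq_card, finrank_fintype_fun_eq_card,
    Fintype.card_sigma] at hπ
  simp only [Fintype.card_fin] at hπ
  have hrank : J.rank ≤ finrank K (LinearMap.ker π) := Submodule.finrank_mono hrange
  omega

end Jordan

section Commuting

variable {s : ℕ} {f m : Fin s → ℕ}
  {J M : Matrix (Σ i : Fin s, Fin (m i) × Fin (f i)) (Σ i : Fin s, Fin (m i) × Fin (f i)) K}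
  (hJ : ∀ x y : Σ i : Fin s, Fin (m i) × Fin (f i),
      J x y = if x.1 = y.1 ∧ (x.2.1 : ℕ) = (y.2.1 : ℕ) ∧ (y.2.2 : ℕ) = (x.2.2 : ℕ) + 1
        then 1 else 0)
  (hM : M * J = J * M)
include hJ hM

theorem apply_eq_apply_succ_of_commute (i : Fin s) (b : Fin (m i)) (a : Fin (f i)) (j : Fin s)
    (c : Fin (m j)) (a' : ℕ) (ha' : a' + 1 < f j) :
    M ⟨i, b, a⟩ ⟨j, c, ⟨a', by omega⟩⟩ =
      if h : (a : ℕ) + 1 < f i then M ⟨i, b, ⟨a + 1, h⟩⟩ ⟨j, c, ⟨a' + 1, ha'⟩⟩ else 0 := by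
  have h := congrFun (congrFun hM ⟨i, b, a⟩) ⟨j, c, ⟨a' + 1, ha'⟩⟩
  change (M ⟨i, b, a⟩ ᵥ* J) _ = (J *ᵥ fun z => M z _) _ at h
  rwa [vecMul_jordan_apply_succ hJ, jordan_mulVec_apply hJ] at h

theorem apply_eq_apply_zero_of_commute (i : Fin s) (b : Fin (m i)) (j : Fin s) (c : Fin (m j))
    (a : ℕ) (hi : a < f i) (hj : a < f j) :
    M ⟨i, b, ⟨a, hi⟩⟩ ⟨j, c, ⟨a, hj⟩⟩ = M ⟨i, b, ⟨0, by omega⟩⟩ ⟨j, c, ⟨0, by omega⟩⟩ := by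
  induction a with
  | zero => rfl
  | succ a ih =>
    rw [← ih (by omega) (by omega),
      apply_eq_apply_succ_of_commute hJ hM i b ⟨a, by omega⟩ j c a hj, dif_pos hi]

theorem apply_eq_zero_of_commute_of_lt (i : Fin s) (b : Fin (m i)) (j : Fin s) (c : Fin (m j))
    (hij : f i < f j) (a : ℕ) (hi : a < f i) (hj : a < f j) :
    M ⟨i, b, ⟨a, hi⟩⟩ ⟨j, c, ⟨a, hj⟩⟩ = 0 := by
  -- slide the entry to position `f i - 1`, where the row of `J * M` is zero
  rw [apply_eq_apply_zero_of_commute hJ hM,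
    ← apply_eq_apply_zero_of_commute hJ hM i b j c (f i - 1) (by omega) (by omega),
    apply_eq_apply_succ_of_commute hJ hM i b ⟨f i - 1, by omega⟩ j c (f i - 1) (by omega),
    dif_neg (by dsimp only; omega)]

variable (hdiag : ∀ x y : Σ i : Fin s, Fin (m i) × Fin (f i),
      (x.2.2 : ℕ) ≠ (y.2.2 : ℕ) → M x y = 0)
include hdiag

theorem blockTriangular_of_commute (hf : StrictAnti f) : M.BlockTriangular Sigma.fst := by
  rintro ⟨i, b, a, ha⟩ ⟨j, c, a', ha'⟩ (hji : j < i)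
  by_cases haa' : a = a'
  · subst haa'
    exact apply_eq_zero_of_commute_of_lt hJ hM i b j c (hf hji) a ha ha'
  · exact hdiag _ _ haa'

theorem submatrix_eq_kronecker_one_of_commute (t : Fin s) (G : Matrix (Fin (m t)) (Fin (m t)) K)
    (h0 : 0 < f t) (hG : ∀ b b', G b b' = M ⟨t, b, ⟨0, h0⟩⟩ ⟨t, b', ⟨0, h0⟩⟩) :
    M.submatrix (Sigma.mk t) (Sigma.mk t) = G ⊗ₖ 1 := by
  ext ⟨b, a, ha⟩ ⟨c, a', ha'⟩
  rw [submatrix_apply, kroneckerMap_apply, one_apply]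
  by_cases haa' : a = a'
  · subst haa'
    rw [if_pos rfl, mul_one, hG, apply_eq_apply_zero_of_commute hJ hM]
  · rw [if_neg (by simpa [Fin.ext_iff] using haa'), mul_zero]
    exact hdiag _ _ haa'

end Commuting

end

theorem rank_of_coarse_diagonal_plus_jordan_ge_general (K : Type*) [Field K] (s : ℕ)
    (f m : Fin s → ℕ) (hf : StrictAnti f) (hfpos : ∀ i, 0 < f i)
    (J M : Matrix (Σ i : Fin s, Fin (m i) × Fin (f i)) (Σ i : Fin s, Fin (m i) × Fin (f i)) K)
    (hJ : ∀ x y : Σ i : Fin s, Fin (m i) × Fin (f i),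
      J x y = if x.1 = y.1 ∧ (x.2.1 : ℕ) = (y.2.1 : ℕ) ∧ (y.2.2 : ℕ) = (x.2.2 : ℕ) + 1
        then 1 else 0)
    (hM : M * J = J * M)
    (hdiag : ∀ x y : Σ i : Fin s, Fin (m i) × Fin (f i),
      (x.2.2 : ℕ) ≠ (y.2.2 : ℕ) → M x y = 0)
    (G : ∀ t : Fin s, Matrix (Fin (m t)) (Fin (m t)) K)
    (hG : ∀ (t : Fin s) (b b' : Fin (m t)),
      G t b b' = M ⟨t, b, ⟨0, hfpos t⟩⟩ ⟨t, b', ⟨0, hfpos t⟩⟩) :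
    (M + J).rank ≥ (∑ t, ((G t) ^ (f t)).rank) + J.rank := by
  have hT : (M + J).BlockTriangular Sigma.fst :=
    (blockTriangular_of_commute hJ hM hdiag hf).add (blockTriangular_jordan hJ)
  have hblock (t : Fin s) : (M + J).submatrix (Sigma.mk t) (Sigma.mk t) =
      G t ⊗ₖ 1 + 1 ⊗ₖ nilpotentJordanBlock K (f t) := by
    change M.submatrix _ _ + J.submatrix _ _ = _
    rw [submatrix_eq_kronecker_one_of_commute hJ hM hdiag t (G t) (hfpos t) (hG t),
      submatrix_jordan hJ]
  have hker : finrank K (LinearMap.ker (M + J).mulVecLin) ≤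
      ∑ t, finrank K (LinearMap.ker (G t ^ f t).mulVecLin) :=
    hT.finrank_ker_le_sum.trans <| Finset.sum_le_sum fun t _ =>
      hblock t ▸ finrank_ker_kroneckerSum_le (G t) (f t)
  have hG_nullity : ∑ t, (G t ^ f t).rank + ∑ t, finrank K (LinearMap.ker (G t ^ f t).mulVecLin) =
      ∑ t, m t := by
    simp only [← Finset.sum_add_distrib, rank_add_finrank_ker_mulVecLin, Fintype.card_fin]
  have hMJ_nullity := (M + J).rank_add_finrank_ker_mulVecLin
  have hJ_rank := rank_jordan_add_sum_le hJ hfpos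
  omega

/-- Let `J` be the Jordan matrix with blocks of sizes `f₁ > ⋯ > f_s > 0`
with multiplicities `m₁, …, m_s`, the basis indexed by the boxes `⟨i, b, a⟩` of the
Young diagram.  If `M ∈ C(J)` and `M̂` is zero outside the coarse diagonal blocks
`N₁, …, N_p` (i.e. `M` connects only boxes lying in the same column), and
`G₁, …, G_s` are the fine diagonal blocks of `N₁`, then
`rank(M̂ + Ĵ) ≥ rank(G₁^{f₁}) + ⋯ + rank(G_s^{f_s}) + rank J`
(ranks being invariant under the permutation conjugation, `rank(M̂+Ĵ) = rank(M+J)`). -/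
theorem rank_of_coarse_diagonal_plus_jordan_ge (K : Type*) [Field K] (s : ℕ)
    (f m : Fin s → ℕ) (hf : StrictAnti f) (hfpos : ∀ i, 0 < f i) (hmpos : ∀ i, 0 < m i)
    (J M : Matrix (Σ i : Fin s, Fin (m i) × Fin (f i)) (Σ i : Fin s, Fin (m i) × Fin (f i)) K)
    (hJ : ∀ x y : Σ i : Fin s, Fin (m i) × Fin (f i),
      J x y = if x.1 = y.1 ∧ (x.2.1 : ℕ) = (y.2.1 : ℕ) ∧ (y.2.2 : ℕ) = (x.2.2 : ℕ) + 1
        then 1 else 0)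
    (hM : M * J = J * M)
    (hdiag : ∀ x y : Σ i : Fin s, Fin (m i) × Fin (f i),
      (x.2.2 : ℕ) ≠ (y.2.2 : ℕ) → M x y = 0)
    (G : ∀ t : Fin s, Matrix (Fin (m t)) (Fin (m t)) K)
    (hG : ∀ (t : Fin s) (b b' : Fin (m t)),
      G t b b' = M ⟨t, b, ⟨0, hfpos t⟩⟩ ⟨t, b', ⟨0, hfpos t⟩⟩) :
    (M + J).rank ≥ (∑ t, ((G t) ^ (f t)).rank) + J.rank :=
  rank_of_coarse_diagonal_plus_jordan_ge_general K s f m hf hfpos J M hJ hM hdiag G hG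
end

section
/- Let K be an infinite field, V a finite-dimensional K-vector space, J ∈ End(V) nilpotent in Jordan first canonical form, and M ∈ C(J) nilpotent. Let M† ∈ C(J) be the matrix whose conjugate M̂† consists only of the coarse diagonal blocks of M̂ (all other entries zero). Then for all but finitely many λ ∈ K, rank(M† + λJ) ≤ rank(M + λJ). -/
/-!
Grade the boxes of the Young diagram by their column index `deg`. Then `J` is homogeneous of
degree one, `M ∈ C(J)` is block upper triangular for `deg`, and `M†` is the degree-zero
component of `M`; taking a homogeneous component commutes with multiplication by `J`, so
`M† ∈ C(J)`.

For `t ≠ 0`, conjugating `M + t • J` by `diagonal (t⁻¹ ^ deg ·)` gives `B(t⁻¹)`, where `B` is the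
polynomial matrix with entries `M x y * X ^ (deg y - deg x) + J x y`. At `0` only the
degree-zero part of `M` survives: `B(0) = M† + J`, which by the same conjugation has the rank
of `M† + t • J`. A nonvanishing minor of `B(0)` of size its rank is a nonzero polynomial, so
the rank of `B(s)` drops below that of `B(0)` for only finitely many `s`.
-/

open Matrix Polynomial

namespace Matrix

section Rank

variable {m n K : Type*} [Fintype m] [Fintype n] [Field K]

lemma exists_linearIndependent_row_submatrix (A : Matrix m n K) {ρ : ℕ} (h : A.rank = ρ) :
    ∃ f : Fin ρ → m, LinearIndependent K (A.submatrix f id).row := by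
  obtain ⟨κ, a, ha, hspan, hli⟩ := exists_linearIndependent' K A.row
  have : Fintype κ := Fintype.ofInjective a ha
  have hcard : Fintype.card κ = ρ := by
    rw [← h, rank_eq_finrank_span_row, ← hspan, finrank_span_eq_card hli]
  have e := (Fintype.equivFinOfCardEq hcard).symm
  exact ⟨a ∘ e, hli.comp e e.injective⟩

lemma exists_submatrix_det_ne_zero (A : Matrix m n K) {ρ : ℕ} (h : A.rank = ρ) :
    ∃ (f : Fin ρ → m) (g : Fin ρ → n), (A.submatrix f g).det ≠ 0 := by
  obtain ⟨f, hf⟩ := A.exists_linearIndependent_row_submatrix h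
  have hrank : (A.submatrix f id)ᵀ.rank = ρ := by
    rw [rank_transpose, hf.rank_matrix, Fintype.card_fin]
  obtain ⟨g, hg⟩ := (A.submatrix f id)ᵀ.exists_linearIndependent_row_submatrix hrank
  refine ⟨f, g, fun h0 => ?_⟩
  have hunit := linearIndependent_rows_iff_isUnit.mp hg
  rw [← isUnit_transpose, isUnit_iff_isUnit_det] at hunit
  exact hunit.ne_zero h0

lemma finite_setOf_rank_map_eval_lt (B : Matrix m n K[X]) (s₀ : K) :
    {s : K | (B.map (eval s)).rank < (B.map (eval s₀)).rank}.Finite := by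
  classical
  obtain ⟨f, g, hdet⟩ := (B.map (eval s₀)).exists_submatrix_det_ne_zero rfl
  have heval (s : K) : ((B.submatrix f g).det).eval s = ((B.map (eval s)).submatrix f g).det :=
    RingHom.map_det (evalRingHom s) (B.submatrix f g)
  have hp : (B.submatrix f g).det ≠ 0 := fun h0 => hdet (by rw [← heval, h0, eval_zero])
  refine (finite_setOfPred_isRoot hp).subset fun s hs => ?_
  by_contra hroot
  have hminor : ((B.map (eval s)).submatrix f g).rank = (B.map (eval s₀)).rank := by
    rw [rank_of_det_ne_zero (by rwa [← heval]), Fintype.card_fin]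
  exact (hminor ▸ rank_submatrix_le _ f g).not_gt hs

end Rank

section Grading

variable {ι R : Type*} (deg : ι → ℕ)

def IsHomogeneous [Zero R] (k : ℕ) (A : Matrix ι ι R) : Prop :=
  ∀ x y, A x y ≠ 0 → deg y = deg x + k

def homogeneousComponent [Zero R] (k : ℕ) (A : Matrix ι ι R) : Matrix ι ι R :=
  of fun x y => if deg y = deg x + k then A x y else 0

variable {deg}

lemma isHomogeneous_homogeneousComponent [Zero R] (k : ℕ) (A : Matrix ι ι R) :
    IsHomogeneous deg k (homogeneousComponent deg k A) := fun x y hxy => by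
  by_contra h
  exact hxy (if_neg h)

lemma IsHomogeneous.blockTriangular [Zero R] {k : ℕ} {A : Matrix ι ι R}
    (hA : IsHomogeneous deg k A) : A.BlockTriangular deg := fun x y hlt => by
  by_contra h
  have := hA x y h
  omega

variable [Fintype ι] [NonUnitalNonAssocSemiring R] {J : Matrix ι ι R}

lemma homogeneousComponent_succ_mul_homogeneous (hJ : IsHomogeneous deg 1 J) (k : ℕ)
    (A : Matrix ι ι R) :
    homogeneousComponent deg (k + 1) (A * J) = homogeneousComponent deg k A * J := by
  ext x y
  have key (z : ι) (hz : J z y ≠ 0) : deg y = deg x + (k + 1) ↔ deg z = deg x + k := by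
    have := hJ z y hz
    omega
  simp only [homogeneousComponent, of_apply, mul_apply, ite_mul, zero_mul]
  split_ifs with h
  · refine Finset.sum_congr rfl fun z _ => ?_
    by_cases hz : J z y = 0
    · simp [hz]
    · rw [if_pos ((key z hz).mp h)]
  · refine (Finset.sum_eq_zero fun z _ => ?_).symm
    by_cases hz : J z y = 0
    · simp [hz]
    · rw [if_neg (mt (key z hz).mpr h)]

lemma homogeneousComponent_succ_homogeneous_mul (hJ : IsHomogeneous deg 1 J) (k : ℕ)
    (A : Matrix ι ι R) :
    homogeneousComponent deg (k + 1) (J * A) = J * homogeneousComponent deg k A := by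
  ext x y
  have key (z : ι) (hz : J x z ≠ 0) : deg y = deg x + (k + 1) ↔ deg y = deg z + k := by
    have := hJ x z hz
    omega
  simp only [homogeneousComponent, of_apply, mul_apply, mul_ite, mul_zero]
  split_ifs with h
  · refine Finset.sum_congr rfl fun z _ => ?_
    by_cases hz : J x z = 0
    · simp [hz]
    · rw [if_pos ((key z hz).mp h)]
  · refine (Finset.sum_eq_zero fun z _ => ?_).symm
    by_cases hz : J x z = 0
    · simp [hz]
    · rw [if_neg (mt (key z hz).mpr h)]

lemma commute_homogeneousComponent (hJ : IsHomogeneous deg 1 J) {A : Matrix ι ι R}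
    (hA : Commute A J) (k : ℕ) : Commute (homogeneousComponent deg k A) J := by
  rw [Commute, SemiconjBy, ← homogeneousComponent_succ_mul_homogeneous hJ,
    ← homogeneousComponent_succ_homogeneous_mul hJ, hA.eq]

end Grading

section TwistedPencil

variable {ι K : Type*} [Field K] (deg : ι → ℕ)

/-- Conjugating `A + t • J` by `diagonal (t⁻¹ ^ deg ·)` gives this matrix evaluated at `t⁻¹`. -/
noncomputable def twistedPencil (A J : Matrix ι ι K) : Matrix ι ι K[X] :=
  of fun x y => C (A x y) * X ^ (deg y - deg x) + C (J x y)

variable {deg} (A J : Matrix ι ι K)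

lemma twistedPencil_map_eval (s : K) :
    (twistedPencil deg A J).map (eval s) = of fun x y => A x y * s ^ (deg y - deg x) + J x y := by
  ext x y
  simp [twistedPencil]

variable {A J}

lemma twistedPencil_map_eval_zero (hA : A.BlockTriangular deg) :
    (twistedPencil deg A J).map (eval 0) = homogeneousComponent deg 0 A + J := by
  ext x y
  rw [twistedPencil_map_eval, of_apply, add_apply, homogeneousComponent, of_apply]
  rcases lt_trichotomy (deg y) (deg x) with hlt | heq | hgt
  · rw [hA hlt, if_neg (by omega), zero_mul]
  · rw [if_pos (by omega), heq, Nat.sub_self, pow_zero, mul_one]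
  · rw [if_neg (by omega), zero_pow (by omega), mul_zero]

lemma twistedPencil_map_eval_of_isHomogeneous (hA : IsHomogeneous deg 0 A) (s : K) :
    (twistedPencil deg A J).map (eval s) = A + J := by
  ext x y
  rw [twistedPencil_map_eval, of_apply, add_apply]
  by_cases hxy : A x y = 0
  · rw [hxy, zero_mul]
  · rw [hA x y hxy, add_zero, Nat.sub_self, pow_zero, mul_one]

lemma rank_add_smul_eq_rank_twistedPencil_map_eval [Fintype ι] [DecidableEq ι]
    (hA : A.BlockTriangular deg) (hJ : IsHomogeneous deg 1 J) {t : K} (ht : t ≠ 0) :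
    (A + t • J).rank = ((twistedPencil deg A J).map (eval t⁻¹)).rank := by
  set D : Matrix ι ι K := diagonal fun x => t⁻¹ ^ deg x
  have hD : IsUnit D.det := by
    rw [det_diagonal]
    exact (Finset.prod_ne_zero_iff.mpr fun x _ => pow_ne_zero _ (inv_ne_zero ht)).isUnit
  have hconj : (A + t • J) * D = D * (twistedPencil deg A J).map (eval t⁻¹) := by
    ext x y
    simp only [D, mul_diagonal, diagonal_mul, twistedPencil_map_eval, of_apply, add_apply,
      smul_apply, smul_eq_mul]
    have hJxy : t * J x y * t⁻¹ ^ deg y = t⁻¹ ^ deg x * J x y := by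
      by_cases hxy : J x y = 0
      · simp [hxy]
      · rw [hJ x y hxy, pow_succ]
        field_simp
    rcases le_or_gt (deg x) (deg y) with hle | hlt
    · obtain ⟨c, hc⟩ := Nat.exists_eq_add_of_le hle
      rw [hc] at hJxy ⊢
      rw [Nat.add_sub_cancel_left]
      linear_combination hJxy
    · rw [hA hlt]
      linear_combination hJxy
  rw [← rank_mul_eq_left_of_isUnit_det D _ hD, hconj, rank_mul_eq_right_of_isUnit_det D _ hD]

end TwistedPencil

section Jordan

variable {ι R : Type*} [DecidableEq ι] (n : ι → ℕ)

/-- Basis indexed by the boxes `⟨i, a⟩` of the Young diagram, row `i`, column `a`;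
`e ⟨i, a + 1⟩ ↦ e ⟨i, a⟩`. -/
def jordanNilpotent [Zero R] [One R] : Matrix (Σ i, Fin (n i)) (Σ i, Fin (n i)) R :=
  of fun x y => if x.1 = y.1 ∧ (y.2 : ℕ) = x.2 + 1 then 1 else 0

lemma isHomogeneous_jordanNilpotent [Zero R] [One R] :
    IsHomogeneous (fun x => (x.2 : ℕ)) 1 (jordanNilpotent (R := R) n) := fun x y hxy => by
  by_contra h
  exact hxy (if_neg fun hc => h hc.2)

variable [Fintype ι] [Semiring R] {n} (A : Matrix (Σ i, Fin (n i)) (Σ i, Fin (n i)) R)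

lemma mul_jordanNilpotent_apply_zero (x : Σ i, Fin (n i)) {j : ι} (hj : 0 < n j) :
    (A * jordanNilpotent n : Matrix _ _ R) x ⟨j, ⟨0, hj⟩⟩ = 0 :=
  Finset.sum_eq_zero fun z _ => by simp [jordanNilpotent]

lemma mul_jordanNilpotent_apply_succ (x : Σ i, Fin (n i)) {j : ι} {b : ℕ} (hb : b + 1 < n j) :
    (A * jordanNilpotent n : Matrix _ _ R) x ⟨j, ⟨b + 1, hb⟩⟩ = A x ⟨j, ⟨b, by omega⟩⟩ := by
  rw [mul_apply, Fintype.sum_eq_single ⟨j, ⟨b, by omega⟩⟩]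
  · simp [jordanNilpotent]
  · rintro ⟨i, a, ha⟩ hne
    simp only [jordanNilpotent, of_apply, add_left_inj, mul_ite, mul_one, mul_zero]
    rw [if_neg]
    rintro ⟨rfl, rfl⟩
    exact hne rfl

lemma jordanNilpotent_mul_apply {i : ι} {a : ℕ} (ha : a + 1 < n i) (y : Σ i, Fin (n i)) :
    (jordanNilpotent n * A : Matrix _ _ R) ⟨i, ⟨a, by omega⟩⟩ y = A ⟨i, ⟨a + 1, ha⟩⟩ y := by
  rw [mul_apply, Fintype.sum_eq_single ⟨i, ⟨a + 1, ha⟩⟩]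
  · simp [jordanNilpotent]
  · rintro ⟨j, b, hb⟩ hne
    simp only [jordanNilpotent, of_apply]
    rw [if_neg, zero_mul]
    rintro ⟨rfl, rfl⟩
    exact hne rfl

lemma blockTriangular_of_commute_jordanNilpotent (hA : Commute A (jordanNilpotent n)) :
    A.BlockTriangular fun x => (x.2 : ℕ) := by
  suffices ∀ (b : ℕ) (j : ι) (hb : b < n j) (i : ι) (a : ℕ) (ha : a < n i),
      b < a → A ⟨i, ⟨a, ha⟩⟩ ⟨j, ⟨b, hb⟩⟩ = 0 from
    fun x y hyx => this _ y.1 y.2.isLt x.1 _ x.2.isLt hyx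
  intro b
  induction b with
  | zero =>
    intro j hb i a ha hba
    obtain ⟨a, rfl⟩ : ∃ a', a = a' + 1 := ⟨a - 1, by omega⟩
    have := congrFun (congrFun hA.eq ⟨i, ⟨a, by omega⟩⟩) ⟨j, ⟨0, hb⟩⟩
    rw [mul_jordanNilpotent_apply_zero, jordanNilpotent_mul_apply _ ha] at this
    exact this.symm
  | succ b ih =>
    intro j hb i a ha hba
    obtain ⟨a, rfl⟩ : ∃ a', a = a' + 1 := ⟨a - 1, by omega⟩
    have := congrFun (congrFun hA.eq ⟨i, ⟨a, by omega⟩⟩) ⟨j, ⟨b + 1, hb⟩⟩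
    rw [mul_jordanNilpotent_apply_succ, jordanNilpotent_mul_apply _ ha] at this
    rw [← this, ih j _ i a _ (by omega)]

end Jordan

end Matrix

theorem rank_coarse_diagonal_part_le_general (K : Type*) [Field K] (r : ℕ)
    (n : Fin r → ℕ)
    (J M : Matrix (Σ i : Fin r, Fin (n i)) (Σ i : Fin r, Fin (n i)) K)
    (hJ : ∀ x y : Σ i : Fin r, Fin (n i),
      J x y = if x.1 = y.1 ∧ (y.2 : ℕ) = (x.2 : ℕ) + 1 then 1 else 0)
    (hM : M * J = J * M)
    (Mdag : Matrix (Σ i : Fin r, Fin (n i)) (Σ i : Fin r, Fin (n i)) K)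
    (hMdag : ∀ x y : Σ i : Fin r, Fin (n i),
      Mdag x y = if (x.2 : ℕ) = (y.2 : ℕ) then M x y else 0) :
    Mdag * J = J * Mdag ∧
      {lam : K | ¬ (Mdag + lam • J).rank ≤ (M + lam • J).rank}.Finite := by
  set deg : (Σ i : Fin r, Fin (n i)) → ℕ := fun x => x.2
  obtain rfl : J = jordanNilpotent n := ext hJ
  obtain rfl : Mdag = homogeneousComponent deg 0 M := by
    ext x y
    rw [hMdag, homogeneousComponent, of_apply, add_zero]
    exact if_congr eq_comm rfl rfl
  have hJhom := isHomogeneous_jordanNilpotent (R := K) n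
  have hMtri := blockTriangular_of_commute_jordanNilpotent M hM
  have hMdaghom := isHomogeneous_homogeneousComponent (deg := deg) 0 M
  refine ⟨commute_homogeneousComponent hJhom hM 0, ?_⟩
  set B := twistedPencil deg M (jordanNilpotent n)
  refine (((finite_setOf_rank_map_eval_lt B 0).image Inv.inv).insert 0).subset fun t ht => ?_
  by_cases ht0 : t = 0
  · exact Or.inl ht0
  refine Or.inr ⟨t⁻¹, ?_, inv_inv t⟩
  have hdag : (homogeneousComponent deg 0 M + t • jordanNilpotent n).rank =
      (B.map (eval 0)).rank := by
    rw [rank_add_smul_eq_rank_twistedPencil_map_eval hMdaghom.blockTriangular hJhom ht0,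
      twistedPencil_map_eval_of_isHomogeneous hMdaghom, twistedPencil_map_eval_zero hMtri]
  rw [Set.mem_ofPred_eq, ← rank_add_smul_eq_rank_twistedPencil_map_eval hMtri hJhom ht0, ← hdag]
  exact not_le.mp ht

/-- `K` an infinite field, `J` the nilpotent Jordan matrix with block sizes
`n 0 ≥ n 1 ≥ ⋯` (basis indexed by the boxes `⟨i, a⟩` of the Young diagram, horizontal
numbering), and `M ∈ C(J)` nilpotent.  Let `M†` be the matrix whose conjugate `M̂†`
consists only of the coarse diagonal blocks of `M̂`, i.e. `M†` keeps exactly the entries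
of `M` connecting boxes in the same column and is zero elsewhere.  Then `M† ∈ C(J)` and,
for all but finitely many `λ ∈ K`, `rank(M† + λJ) ≤ rank(M + λJ)`. -/
theorem rank_coarse_diagonal_part_le (K : Type*) [Field K] [Infinite K] (r : ℕ)
    (n : Fin r → ℕ) (hmono : Antitone n) (hpos : ∀ i, 0 < n i)
    (J M : Matrix (Σ i : Fin r, Fin (n i)) (Σ i : Fin r, Fin (n i)) K)
    (hJ : ∀ x y : Σ i : Fin r, Fin (n i),
      J x y = if x.1 = y.1 ∧ (y.2 : ℕ) = (x.2 : ℕ) + 1 then 1 else 0)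
    (hM : M * J = J * M) (hMnil : IsNilpotent M)
    (Mdag : Matrix (Σ i : Fin r, Fin (n i)) (Σ i : Fin r, Fin (n i)) K)
    (hMdag : ∀ x y : Σ i : Fin r, Fin (n i),
      Mdag x y = if (x.2 : ℕ) = (y.2 : ℕ) then M x y else 0) :
    Mdag * J = J * Mdag ∧
      {lam : K | ¬ (Mdag + lam • J).rank ≤ (M + lam • J).rank}.Finite :=
  rank_coarse_diagonal_part_le_general K r n J M hJ hM Mdag hMdag
end

section
/- Let A be a graded Artinian K-algebra and z ∈ A₁ a linear form with z^p = 0, z^{p−1} ≠ 0. Then the multiplication maps ×z ∈ End(A) and ×z* ∈ End(Gr_{(z)}(A)) have the same Jordan canonical form; equivalently rank((×z)^α) = rank((×z*)^α) for all α ≥ 1. -/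
/-!
The range of `(×z)^α` is the ideal `(z^α)`. Since `×z*` maps each graded piece
`(z^i)/(z^{i+1})` onto the next one, the range of `(×z*)^α` is the sum of the pieces of
index `≥ α`. Both dimensions therefore obey the recursion
`d(α) = dim (z^α)/(z^{α+1}) + d(α + 1)`, and both vanish from `α = p` on, where `z^p = 0`.
Comparing ranks as cardinals makes this additivity hold without any finiteness argument.
-/

open Module LinearMap

/-- The `i`-th graded piece `(z^i)/(z^{i+1})` of the form ring `Gr_{(z)}(A)`,
as a `K`-vector space. -/
abbrev grPiece (K : Type*) (A : Type*) [Field K] [CommRing A] [Algebra K A]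
    (z : A) (i : ℕ) :=
  ((Ideal.span {z ^ i}).restrictScalars K) ⧸
    Submodule.comap ((Ideal.span {z ^ i}).restrictScalars K).subtype
      ((Ideal.span {z ^ (i + 1)}).restrictScalars K)

theorem Nat.eq_of_eq_add_succ_of_forall_ge {β : Type*} [Add β] {c f g : ℕ → β}
    (hf : ∀ j, f j = c j + f (j + 1)) (hg : ∀ j, g j = c j + g (j + 1)) {p : ℕ}
    (hp : ∀ j, p ≤ j → f j = g j) (α : ℕ) : f α = g α := by
  rcases le_total α p with hαp | hpα
  · induction hαp using Nat.decreasingInduction with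
    | self => exact hp p le_rfl
    | of_succ k _ ih => rw [hf, hg, ih]
  · exact hp α hpα

universe v

namespace DirectSum

variable (R : Type*) [Semiring R] (M : ℕ → Type*) [∀ i, AddCommMonoid (M i)]
  [∀ i, Module R (M i)]

def tail (α : ℕ) : Submodule R (⨁ i, M i) :=
  ⨆ j, LinearMap.range (lof R ℕ M (j + α))

variable {R M}

theorem tail_zero : tail R M 0 = ⊤ := by
  refine eq_top_iff.2 fun x _ => ?_
  induction x using DirectSum.induction_on with
  | zero => exact zero_mem _
  | of i y => exact Submodule.mem_iSup_of_mem i ⟨y, rfl⟩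
  | add x y hx hy => exact add_mem (hx trivial) (hy trivial)

theorem tail_eq_sup (α : ℕ) :
    tail R M α = LinearMap.range (lof R ℕ M α) ⊔ tail R M (α + 1) := by
  rw [tail, tail, ← sup_iSup_nat_succ]
  congr 1
  · rw [Nat.zero_add]
  · exact iSup_congr fun j => by rw [Nat.add_right_comm, Nat.add_assoc]

theorem disjoint_range_lof_tail_succ (α : ℕ) :
    Disjoint (LinearMap.range (lof R ℕ M α)) (tail R M (α + 1)) := by
  have hker : tail R M (α + 1) ≤ LinearMap.ker (component R ℕ M α) := by
    refine iSup_le fun j => ?_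
    rintro _ ⟨y, rfl⟩
    rw [LinearMap.mem_ker, component.of, dif_neg (by omega)]
  refine Submodule.disjoint_def.2 ?_
  rintro _ ⟨y, rfl⟩ hy
  rw [← component.lof_self R α y, hker hy, map_zero]

theorem tail_eq_bot {α : ℕ} (h : ∀ j, α ≤ j → Subsingleton (M j)) : tail R M α = ⊥ :=
  iSup_eq_bot.2 fun j => by
    have := h (j + α) (Nat.le_add_left α j)
    exact LinearMap.range_eq_bot.2 (Subsingleton.elim _ _)

theorem map_toModule_lof_succ_comp_tail (g : ∀ i, M i →ₗ[R] M (i + 1))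
    (hg : ∀ i, Function.Surjective (g i)) (α : ℕ) :
    (tail R M α).map (toModule R ℕ (⨁ i, M i) fun i => lof R ℕ M (i + 1) ∘ₗ g i) =
      tail R M (α + 1) := by
  simp only [tail, Submodule.map_iSup, ← LinearMap.range_comp]
  refine iSup_congr fun j => ?_
  rw [show _ ∘ₗ lof R ℕ M (j + α) = lof R ℕ M (j + α + 1) ∘ₗ g (j + α) by ext; simp,
    LinearMap.range_comp, LinearMap.range_eq_top.2 (hg _), Submodule.map_top]
  rfl

theorem range_toModule_lof_succ_comp_pow (g : ∀ i, M i →ₗ[R] M (i + 1))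
    (hg : ∀ i, Function.Surjective (g i)) (α : ℕ) :
    LinearMap.range ((toModule R ℕ (⨁ i, M i) fun i => lof R ℕ M (i + 1) ∘ₗ g i) ^ α) =
      tail R M α := by
  induction α with
  | zero => rw [pow_zero, Module.End.one_eq_id, LinearMap.range_id, tail_zero]
  | succ α ih =>
    rw [pow_succ', Module.End.mul_eq_comp, LinearMap.range_comp, ih,
      map_toModule_lof_succ_comp_tail g hg]

theorem rank_tail {R : Type*} [Ring R] [HasRankNullity.{v} R] {M : ℕ → Type v}
    [∀ i, AddCommGroup (M i)] [∀ i, Module R (M i)] (α : ℕ) :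
    Module.rank R (tail R M α) = Module.rank R (M α) + Module.rank R (tail R M (α + 1)) := by
  have := nontrivial_of_hasRankNullity R
  have hinj : Function.Injective (lof R ℕ M α) := of_injective α
  have hsup :=
    Submodule.rank_sup_add_rank_inf_eq (LinearMap.range (lof R ℕ M α)) (tail R M (α + 1))
  rw [(disjoint_range_lof_tail_succ α).eq_bot, rank_bot, add_zero] at hsup
  rw [tail_eq_sup α, hsup, rank_range_of_injective _ hinj]

end DirectSum

section PowerFiltration

variable {R A : Type*} [CommSemiring R] [CommSemiring A] [Algebra R A] (z : A)

theorem range_lmul_pow (α : ℕ) :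
    LinearMap.range (Algebra.lmul R A z ^ α) = (Ideal.span {z ^ α}).restrictScalars R := by
  rw [← map_pow]
  ext x
  simp [Ideal.mem_span_singleton']

theorem span_pow_succ_le (j : ℕ) :
    (Ideal.span {z ^ (j + 1)}).restrictScalars R ≤ (Ideal.span {z ^ j}).restrictScalars R :=
  fun _ hx => Ideal.span_singleton_le_span_singleton.2 (pow_dvd_pow z j.le_succ) hx

theorem span_pow_eq_bot {z : A} {p j : ℕ} (hzp : z ^ p = 0) (hj : p ≤ j) :
    (Ideal.span {z ^ j}).restrictScalars R = ⊥ := by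
  rw [pow_eq_zero_of_le hj hzp, Ideal.span_singleton_eq_bot.2 rfl, Submodule.restrictScalars_bot]

end PowerFiltration

section FormRing

variable {K A : Type*} [Field K] [CommRing A] [Algebra K A] (z : A)

theorem rank_span_pow_eq_add (j : ℕ) :
    Module.rank K ((Ideal.span {z ^ j}).restrictScalars K) =
      Module.rank K (grPiece K A z j) +
        Module.rank K ((Ideal.span {z ^ (j + 1)}).restrictScalars K) := by
  rw [← (Submodule.comapSubtypeEquivOfLe (span_pow_succ_le z j)).rank_eq,
    Submodule.rank_quotient_add_rank]

variable {z}

theorem subsingleton_grPiece {p j : ℕ} (hzp : z ^ p = 0) (hj : p ≤ j) :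
    Subsingleton (grPiece K A z j) := by
  have : Subsingleton ((Ideal.span {z ^ j}).restrictScalars K) := by
    rw [span_pow_eq_bot (R := K) hzp hj]; infer_instance
  infer_instance

theorem surjective_of_map_mk_eq_mk_mul {i : ℕ}
    (g : grPiece K A z i →ₗ[K] grPiece K A z (i + 1))
    (hg : ∀ (a : A) (ha : a ∈ (Ideal.span {z ^ i}).restrictScalars K)
        (hza : z * a ∈ (Ideal.span {z ^ (i + 1)}).restrictScalars K),
      g (Submodule.Quotient.mk ⟨a, ha⟩) = Submodule.Quotient.mk ⟨z * a, hza⟩) :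
    Function.Surjective g := by
  rintro ⟨⟨b, hb⟩⟩
  obtain ⟨c, rfl⟩ := Ideal.mem_span_singleton'.1 hb
  have ha : c * z ^ i ∈ (Ideal.span {z ^ i}).restrictScalars K :=
    Ideal.mem_span_singleton'.2 ⟨c, rfl⟩
  have hza : z * (c * z ^ i) = c * z ^ (i + 1) := by ring
  exact ⟨Submodule.Quotient.mk ⟨c * z ^ i, ha⟩, (hg _ ha (hza ▸ hb)).trans (by congr 2)⟩

end FormRing

theorem formRing_same_jordan_form_general (K A : Type*) [Field K] [CommRing A] [Algebra K A]
    (z : A) (p : ℕ) (hzp : z ^ p = 0)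
    -- `g i : (z^i)/(z^{i+1}) → (z^{i+1})/(z^{i+2})` is induced by multiplication by `z`:
    (g : ∀ i : ℕ, grPiece K A z i →ₗ[K] grPiece K A z (i + 1))
    (hg : ∀ (i : ℕ) (a : A) (ha : a ∈ (Ideal.span {z ^ i}).restrictScalars K)
        (hza : z * a ∈ (Ideal.span {z ^ (i + 1)}).restrictScalars K),
      g i (Submodule.Quotient.mk ⟨a, ha⟩) = Submodule.Quotient.mk ⟨z * a, hza⟩)
    -- `E = ×z*` is the endomorphism of `Gr_{(z)}(A)` assembled from the `g i`:
    (E : Module.End K (DirectSum ℕ (fun i => grPiece K A z i)))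
    (hE : E = DirectSum.toModule K ℕ (DirectSum ℕ (fun i => grPiece K A z i))
      (fun i => (DirectSum.lof K ℕ (fun j => grPiece K A z j) (i + 1)) ∘ₗ g i)) :
    ∀ α : ℕ, 1 ≤ α →
      finrank K (LinearMap.range ((Algebra.lmul K A z) ^ α)) =
        finrank K (LinearMap.range (E ^ α)) := by
  intro α _
  subst hE
  suffices Module.rank K (LinearMap.range (Algebra.lmul K A z ^ α)) =
      Module.rank K (DirectSum.tail K (grPiece K A z) α) by
    rw [DirectSum.range_toModule_lof_succ_comp_pow g
      fun i => surjective_of_map_mk_eq_mk_mul (g i) (hg i)]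
    exact congrArg Cardinal.toNat this
  rw [range_lmul_pow]
  refine Nat.eq_of_eq_add_succ_of_forall_ge (p := p) (rank_span_pow_eq_add z)
    (fun j => DirectSum.rank_tail (R := K) (M := grPiece K A z) j) (fun j hj => ?_) α
  rw [span_pow_eq_bot hzp hj,
    DirectSum.tail_eq_bot fun i hi => subsingleton_grPiece hzp (hj.trans hi), rank_bot, rank_bot]

/-- `A` a graded Artinian `K`-algebra, `z ∈ A₁` a linear form with
`z^p = 0`, `z^{p-1} ≠ 0`.  Let `z*` be the degree-one endomorphism of
`Gr_{(z)}(A) = ⨁ᵢ (z^i)/(z^{i+1})` induced by multiplication by `z`.  Then `×z` and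
`×z*` have the same Jordan canonical form; equivalently
`rank((×z)^α) = rank((×z*)^α)` for all `α ≥ 1`. -/
theorem formRing_same_jordan_form (K A : Type*) [Field K] [CommRing A] [Algebra K A]
    [FiniteDimensional K A] (𝒜 : ℕ → Submodule K A) [GradedAlgebra 𝒜]
    (z : A) (hz1 : z ∈ 𝒜 1) (p : ℕ) (hp : 0 < p) (hzp : z ^ p = 0)
    (hzp1 : z ^ (p - 1) ≠ 0)
    -- `g i : (z^i)/(z^{i+1}) → (z^{i+1})/(z^{i+2})` is induced by multiplication by `z`:
    (g : ∀ i : ℕ, grPiece K A z i →ₗ[K] grPiece K A z (i + 1))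
    (hg : ∀ (i : ℕ) (a : A) (ha : a ∈ (Ideal.span {z ^ i}).restrictScalars K)
        (hza : z * a ∈ (Ideal.span {z ^ (i + 1)}).restrictScalars K),
      g i (Submodule.Quotient.mk ⟨a, ha⟩) = Submodule.Quotient.mk ⟨z * a, hza⟩)
    -- `E = ×z*` is the endomorphism of `Gr_{(z)}(A)` assembled from the `g i`:
    (E : Module.End K (DirectSum ℕ (fun i => grPiece K A z i)))
    (hE : E = DirectSum.toModule K ℕ (DirectSum ℕ (fun i => grPiece K A z i))
      (fun i => (DirectSum.lof K ℕ (fun j => grPiece K A z j) (i + 1)) ∘ₗ g i)) :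
    ∀ α : ℕ, 1 ≤ α →
      finrank K (LinearMap.range ((Algebra.lmul K A z) ^ α)) =
        finrank K (LinearMap.range (E ^ α)) :=
  formRing_same_jordan_form_general K A z p hzp g hg E hE
end

section
/- Let A be a graded Artinian K-algebra and z ∈ A₁ a linear form. The kernel of the multiplication map ×z* on Gr_{(z)}(A) equals ⨁_{i=1}^{p} ((z^{i−1}) ∩ (0:z) + (z^i))/(z^i). -/
/-! Multiplication by `z*` on `Gr_{(z)}(A)` is the direct sum of the maps
`(z^i)/(z^{i+1}) → (z^{i+1})/(z^{i+2})`, `ā ↦ z̄a`, so its kernel is the direct sum of their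
kernels. If `a ∈ (z^i)` and `za = z^{i+2}s`, then `a - z^{i+1}s` still lies in `(z^i)` and is
killed by `z`; so the class of `a` is killed exactly when it has a representative in
`(z^i) ∩ (0:z)`. -/

open Module LinearMap

namespace DirectSum

variable {R ι : Type*} [Semiring R] [DecidableEq ι] {M : ι → Type*}
  [∀ i, AddCommMonoid (M i)] [∀ i, Module R (M i)]

theorem toModule_lof_comp_apply_of_injective {f : ι → ι} (hf : Function.Injective f)
    (g : ∀ i, M i →ₗ[R] M (f i)) (x : ⨁ i, M i) (i : ι) :
    toModule R ι (⨁ i, M i) (fun j => lof R ι M (f j) ∘ₗ g j) x (f i) = g i (x i) := by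
  induction x using DirectSum.induction_on with
  | zero => simp
  | of j v =>
    rw [← lof_eq_of R, toModule_lof, comp_apply, lof_eq_of, lof_eq_of, of_apply, of_apply]
    by_cases hji : j = i
    · subst hji; simp
    · rw [dif_neg (hf.ne hji), dif_neg hji, map_zero]
  | add x y hx hy => simp only [map_add, add_apply, hx, hy]

theorem ker_toModule_lof_comp_of_injective {f : ι → ι} (hf : Function.Injective f)
    (g : ∀ i, M i →ₗ[R] M (f i)) :
    ker (toModule R ι (⨁ i, M i) (fun j => lof R ι M (f j) ∘ₗ g j)) =
      ⨆ i, (ker (g i)).map (lof R ι M i) := by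
  classical
  apply le_antisymm
  · intro x hx
    have hxi (i : ι) : g i (x i) = 0 := by
      rw [← toModule_lof_comp_apply_of_injective hf, mem_ker.mp hx, zero_apply]
    rw [← sum_support_of x]
    exact Submodule.sum_mem _ fun i _ =>
      Submodule.mem_iSup_of_mem i ⟨x i, hxi i, lof_eq_of R ι M i (x i)⟩
  · refine iSup_le fun i => ?_
    rintro _ ⟨y, hy, rfl⟩
    rw [mem_ker, toModule_lof, comp_apply, mem_ker.mp hy, map_zero]

end DirectSum

section PowerIdeals

variable {R : Type*} [CommRing R] {z a : R} {n : ℕ}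

theorem mul_mem_span_pow_succ (ha : a ∈ Ideal.span {z ^ n}) :
    z * a ∈ Ideal.span {z ^ (n + 1)} := by
  rw [Ideal.mem_span_singleton, pow_succ'] at *
  exact mul_dvd_mul_left z ha

variable (K : Type*) [CommSemiring K] [Algebra K R]

theorem mul_mem_span_pow_add_two_iff (ha : a ∈ Ideal.span {z ^ n}) :
    z * a ∈ Ideal.span {z ^ (n + 2)} ↔
      a ∈ ((Ideal.span {z ^ n}).restrictScalars K ⊓ ker (Algebra.lmul K R z)) ⊔
        (Ideal.span {z ^ (n + 1)}).restrictScalars K := by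
  constructor
  · intro hza
    obtain ⟨s, hs⟩ := Ideal.mem_span_singleton.mp hza
    have hc : a - z ^ (n + 1) * s ∈ Ideal.span {z ^ n} :=
      sub_mem ha <| Ideal.mul_mem_right _ _ <|
        Ideal.mem_span_singleton.mpr (pow_dvd_pow z n.le_succ)
    have hzc : z * (a - z ^ (n + 1) * s) = 0 := by rw [mul_sub, hs]; ring
    rw [← sub_add_cancel a (z ^ (n + 1) * s)]
    exact Submodule.add_mem_sup ⟨hc, hzc⟩
      (Ideal.mul_mem_right _ _ (Ideal.mem_span_singleton_self _))
  · intro h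
    obtain ⟨c, ⟨-, hzc⟩, d, hd, rfl⟩ := Submodule.mem_sup.mp h
    have hzc : z * c = 0 := hzc
    rw [mul_add, hzc, zero_add]
    exact mul_mem_span_pow_succ hd

end PowerIdeals

theorem ker_grPiece_mul {K A : Type*} [Field K] [CommRing A] [Algebra K A] {z : A} {i : ℕ}
    (g : grPiece K A z i →ₗ[K] grPiece K A z (i + 1))
    (hg : ∀ (a : A) (ha : a ∈ (Ideal.span {z ^ i}).restrictScalars K)
        (hza : z * a ∈ (Ideal.span {z ^ (i + 1)}).restrictScalars K),
      g (Submodule.Quotient.mk ⟨a, ha⟩) = Submodule.Quotient.mk ⟨z * a, hza⟩) :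
    ker g =
      Submodule.map
        (Submodule.mkQ (Submodule.comap ((Ideal.span {z ^ i}).restrictScalars K).subtype
          ((Ideal.span {z ^ (i + 1)}).restrictScalars K)))
        (Submodule.comap ((Ideal.span {z ^ i}).restrictScalars K).subtype
          ((((Ideal.span {z ^ i}).restrictScalars K) ⊓ ker (Algebra.lmul K A z)) ⊔
            ((Ideal.span {z ^ (i + 1)}).restrictScalars K))) := by
  ext y
  obtain ⟨⟨a, ha⟩, rfl⟩ := Submodule.Quotient.mk_surjective _ y
  rw [mem_ker, hg a ha (mul_mem_span_pow_succ ha), Submodule.Quotient.mk_eq_zero,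
    ← Submodule.mkQ_apply, ← Submodule.mem_comap, Submodule.comap_map_mkQ,
    sup_eq_right.mpr (Submodule.comap_mono le_sup_right)]
  exact mul_mem_span_pow_add_two_iff K ha

theorem ker_of_formRing_multiplication_general (K A : Type*) [Field K] [CommRing A] [Algebra K A]
    (z : A)
    (g : ∀ i : ℕ, grPiece K A z i →ₗ[K] grPiece K A z (i + 1))
    (hg : ∀ (i : ℕ) (a : A) (ha : a ∈ (Ideal.span {z ^ i}).restrictScalars K)
        (hza : z * a ∈ (Ideal.span {z ^ (i + 1)}).restrictScalars K),
      g i (Submodule.Quotient.mk ⟨a, ha⟩) = Submodule.Quotient.mk ⟨z * a, hza⟩)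
    (E : Module.End K (DirectSum ℕ (fun i => grPiece K A z i)))
    (hE : E = DirectSum.toModule K ℕ (DirectSum ℕ (fun i => grPiece K A z i))
      (fun i => (DirectSum.lof K ℕ (fun j => grPiece K A z j) (i + 1)) ∘ₗ g i)) :
    LinearMap.ker E =
      ⨆ i : ℕ, Submodule.map (DirectSum.lof K ℕ (fun j => grPiece K A z j) i)
        (Submodule.map
          (Submodule.mkQ (Submodule.comap ((Ideal.span {z ^ i}).restrictScalars K).subtype
            ((Ideal.span {z ^ (i + 1)}).restrictScalars K)))
          (Submodule.comap ((Ideal.span {z ^ i}).restrictScalars K).subtype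
            ((((Ideal.span {z ^ i}).restrictScalars K) ⊓
                LinearMap.ker (Algebra.lmul K A z)) ⊔
              ((Ideal.span {z ^ (i + 1)}).restrictScalars K)))) := by
  subst hE
  rw [DirectSum.ker_toModule_lof_comp_of_injective Nat.succ_injective g]
  simp_rw [ker_grPiece_mul (g _) (hg _)]

/-- `A` a graded Artinian `K`-algebra, `z ∈ A₁` with `z^p = 0`.  The
kernel of the multiplication map `×z*` on `Gr_{(z)}(A) = ⨁ᵢ (z^i)/(z^{i+1})` equals
`⨁ᵢ ((z^{i-1}) ∩ (0:z) + (z^i))/(z^i)` (indexing the summand inside `(z^i)/(z^{i+1})`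
as the image of `(z^i) ∩ (0:z) + (z^{i+1})`). -/
theorem ker_of_formRing_multiplication (K A : Type*) [Field K] [CommRing A] [Algebra K A]
    [FiniteDimensional K A] (𝒜 : ℕ → Submodule K A) [GradedAlgebra 𝒜]
    (z : A) (hz1 : z ∈ 𝒜 1) (p : ℕ) (hp : 0 < p) (hzp : z ^ p = 0)
    (g : ∀ i : ℕ, grPiece K A z i →ₗ[K] grPiece K A z (i + 1))
    (hg : ∀ (i : ℕ) (a : A) (ha : a ∈ (Ideal.span {z ^ i}).restrictScalars K)
        (hza : z * a ∈ (Ideal.span {z ^ (i + 1)}).restrictScalars K),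
      g i (Submodule.Quotient.mk ⟨a, ha⟩) = Submodule.Quotient.mk ⟨z * a, hza⟩)
    (E : Module.End K (DirectSum ℕ (fun i => grPiece K A z i)))
    (hE : E = DirectSum.toModule K ℕ (DirectSum ℕ (fun i => grPiece K A z i))
      (fun i => (DirectSum.lof K ℕ (fun j => grPiece K A z j) (i + 1)) ∘ₗ g i)) :
    LinearMap.ker E =
      ⨆ i : ℕ, Submodule.map (DirectSum.lof K ℕ (fun j => grPiece K A z j) i)
        (Submodule.map
          (Submodule.mkQ (Submodule.comap ((Ideal.span {z ^ i}).restrictScalars K).subtype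
            ((Ideal.span {z ^ (i + 1)}).restrictScalars K)))
          (Submodule.comap ((Ideal.span {z ^ i}).restrictScalars K).subtype
            ((((Ideal.span {z ^ i}).restrictScalars K) ⊓
                LinearMap.ker (Algebra.lmul K A z)) ⊔
              ((Ideal.span {z ^ (i + 1)}).restrictScalars K)))) :=
  ker_of_formRing_multiplication_general K A z g hg E hE
end
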